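/- arXiv:1906.04642 — 5 statements merged into one kernel-verified Lean document; each statement's English description precedes it below -/
import Mathlib

section
/- Let X be a Banach space and A, B : ℝ → L(X) continuous with ‖A(t)‖ ≤ M and ‖B(t)‖ ≤ M for all t. Let T(t,s) be the evolution operator of ẋ = A(t)x satisfying ‖T(t,s)‖ ≤ K e^{α(t−s)} for t ≥ s, with K ≥ 1. Suppose ‖∫_{t₁}^{t₂} B(t) dt‖ ≤ δ whenever |t₂ − t₁| ≤ h. Then the evolution operator S(t,s) of ẏ = A(t)y + B(t)y satisfies ‖S(t,s)‖ ≤ (1+δ)K e^{β(t−s)} for t ≥ s, where β = α + 3MKδ + log((1+δ)K)/h. -/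
/-!
Put `c(u) = ∫_u^t B`. Differentiating `u ↦ T(t,u) (1 + c(u)) S(u,s)` gives the
variation-of-constants formula
`S(t,s) = T(t,s) (1 + c(s)) + ∫_s^t T(t,u) (c(u) (A(u) + B(u)) - A(u) c(u)) S(u,s) du`,
in which `B` enters only through its integrals. On an interval of length at most `h` the
integrand is bounded by `3MKδ e^{α(t-u)} ‖S(u,s)‖`, so Gronwall's inequality gives
`‖S(t,s)‖ ≤ (1+δ) K e^{(α + 3MKδ)(t-s)}`. Chaining `⌊(t-s)/h⌋ + 1` such intervals through the
cocycle property of `S` costs one factor `(1+δ) K` per interval, whence the term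
`log((1+δ)K)/h` in the exponent.
-/

open Set Metric

section Gronwall

variable {E : Type*} [NormedAddCommGroup E] [NormedSpace ℝ E]

theorem norm_le_mul_exp_of_hasDerivAt {v v' : ℝ → E} {L : ℝ}
    (hv : ∀ t, HasDerivAt v (v' t) t) (hv' : ∀ t, ‖v' t‖ ≤ L * ‖v t‖) {a b : ℝ} (hab : a ≤ b) :
    ‖v b‖ ≤ ‖v a‖ * Real.exp (L * (b - a)) := by
  have := norm_le_gronwallBound_of_norm_deriv_right_le (ε := 0)
    (fun t _ => (hv t).continuousAt.continuousWithinAt) (fun t _ => (hv t).hasDerivWithinAt)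
    le_rfl (fun t _ => by simpa using hv' t) b (right_mem_Icc.2 hab)
  rwa [gronwallBound_ε0] at this

theorem norm_le_mul_exp_abs_of_hasDerivAt {v v' : ℝ → E} {L : ℝ}
    (hv : ∀ t, HasDerivAt v (v' t) t) (hv' : ∀ t, ‖v' t‖ ≤ L * ‖v t‖) (a b : ℝ) :
    ‖v b‖ ≤ ‖v a‖ * Real.exp (L * |b - a|) := by
  rcases le_total a b with hab | hba
  · rw [abs_of_nonneg (sub_nonneg.2 hab)]
    exact norm_le_mul_exp_of_hasDerivAt hv hv' hab
  · have hrev := norm_le_mul_exp_of_hasDerivAt (v := fun t => v (-t)) (v' := fun t => -v' (-t))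
      (fun t => by simpa [Function.comp_def] using (hv (-t)).scomp t (hasDerivAt_neg t))
      (fun t => by simpa using hv' (-t)) (neg_le_neg hba)
    rw [abs_of_nonpos (sub_nonpos.2 hba), neg_sub]
    simp only [neg_neg] at hrev
    rwa [show -b - -a = a - b by ring] at hrev

theorem le_mul_exp_of_le_add_mul_integral {N : ℝ → ℝ} {C L s t : ℝ} (hNc : Continuous N)
    (hL : 0 ≤ L) (hst : s ≤ t) (hN : ∀ u ∈ Icc s t, N u ≤ C + L * ∫ r in s..u, N r) :
    N t ≤ C * Real.exp (L * (t - s)) := by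
  set Φ : ℝ → ℝ := fun u => ∫ r in s..u, N r
  have hΦ : ∀ u, HasDerivAt Φ (N u) u := fun u => (hNc.integral_hasStrictDerivAt s u).hasDerivAt
  have hΦt : Φ t ≤ gronwallBound 0 L C (t - s) :=
    le_gronwallBound_of_liminf_deriv_right_le (HasDerivAt.continuousOn fun u _ => hΦ u)
      (fun u _ r hr => (hΦ u).hasDerivWithinAt.liminf_right_slope_le hr) (by simp [Φ])
      (fun u hu => by linarith [hN u (Ico_subset_Icc_self hu)]) t (right_mem_Icc.2 hst)
  have hNt := hN t (right_mem_Icc.2 hst)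
  rcases hL.eq_or_lt with rfl | hL
  · simpa using hNt
  simp only [gronwallBound_of_K_ne_0 hL.ne', zero_mul, zero_add] at hΦt
  calc N t ≤ C + L * Φ t := hNt
    _ ≤ C + L * (C / L * (Real.exp (L * (t - s)) - 1)) := by gcongr
    _ = C * Real.exp (L * (t - s)) := by field_simp; ring

end Gronwall

/- An evolution operator is only given through the derivatives of `r ↦ T r s x`; these two
lemmas upgrade them to continuity and differentiability of `r ↦ T r s` in operator norm, which
is what differentiating the inverse `r ↦ T s r` requires. -/

section OperatorValued

variable {X Y : Type*} [NormedAddCommGroup X] [NormedSpace ℝ X]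
  [NormedAddCommGroup Y] [NormedSpace ℝ Y]

theorem continuousAt_of_hasDerivAt_apply {F G : ℝ → X →L[ℝ] Y} {p r C : ℝ} (hr : 0 < r)
    (hF : ∀ x, ∀ t ∈ ball p r, HasDerivAt (fun τ => F τ x) (G t x) t)
    (hG : ∀ t ∈ ball p r, ‖G t‖ ≤ C) : ContinuousAt F p := by
  have hC : 0 ≤ C := (norm_nonneg _).trans (hG p (mem_ball_self hr))
  refine continuousAt_of_locally_lipschitz hr C fun t ht => ?_
  rw [dist_eq_norm, Real.dist_eq]
  refine (F t - F p).opNorm_le_bound (by positivity) fun x => ?_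
  have := (convex_ball p r).norm_image_sub_le_of_norm_hasDerivWithin_le
    (f := fun τ => F τ x) (fun τ hτ => (hF x τ hτ).hasDerivWithinAt)
    (fun τ hτ => (G τ).le_of_opNorm_le (hG τ hτ) x) (mem_ball_self hr) ht
  rw [sub_apply, Real.norm_eq_abs] at *
  linarith [this]

theorem hasDerivAt_of_hasDerivAt_apply [CompleteSpace Y] {F G : ℝ → X →L[ℝ] Y}
    (hG : Continuous G) (hF : ∀ x t, HasDerivAt (fun τ => F τ x) (G t x) t) (t : ℝ) :
    HasDerivAt F (G t) t := by
  have hFG : F = fun r => F t + ∫ τ in t..r, G τ := by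
    funext r
    ext x
    rw [add_apply,
      ContinuousLinearMap.intervalIntegral_apply (hG.intervalIntegrable _ _),
      intervalIntegral.integral_eq_sub_of_hasDerivAt (fun τ _ => hF x τ)
        ((hG.clm_apply continuous_const).intervalIntegrable _ _)]
    abel
  rw [hFG]
  exact (hG.integral_hasStrictDerivAt t t).hasDerivAt.const_add _

end OperatorValued

section Evolution

variable {X : Type*} [NormedAddCommGroup X] [NormedSpace ℝ X]

structure IsEvolutionOperator (A : ℝ → X →L[ℝ] X) (T : ℝ → ℝ → X →L[ℝ] X) : Prop where
  self_eq_one : ∀ s, T s s = 1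
  hasDerivAt : ∀ s x t, HasDerivAt (fun r => T r s x) (A t (T t s x)) t

namespace IsEvolutionOperator

variable {A : ℝ → X →L[ℝ] X} {T : ℝ → ℝ → X →L[ℝ] X} {M : ℝ}

theorem cocycle (hT : IsEvolutionOperator A T) (hA : ∀ t, ‖A t‖ ≤ M) (p q r : ℝ) :
    T p q * T q r = T p r := by
  ext x
  have hLip : ∀ t, LipschitzOnWith M.toNNReal (A t) univ := fun t =>
    ((A t).lipschitz.weaken
      (norm_toNNReal (a := A t) ▸ Real.toNNReal_le_toNNReal (hA t))).lipschitzOnWith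
  have := ODE_solution_unique_univ (s := fun _ => univ) (t₀ := q) hLip
    (fun t => ⟨hT.hasDerivAt q (T q r x) t, trivial⟩) (fun t => ⟨hT.hasDerivAt r x t, trivial⟩)
    (by simp [hT.self_eq_one])
  exact congrFun this p

theorem mul_swap_eq_one (hT : IsEvolutionOperator A T) (hA : ∀ t, ‖A t‖ ≤ M) (p q : ℝ) :
    T p q * T q p = 1 := by
  rw [hT.cocycle hA, hT.self_eq_one]

theorem norm_le_exp (hT : IsEvolutionOperator A T) (hA : ∀ t, ‖A t‖ ≤ M) (r q : ℝ) :
    ‖T r q‖ ≤ Real.exp (M * |r - q|) :=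
  (T r q).opNorm_le_bound (Real.exp_pos _).le fun x => by
    simpa [hT.self_eq_one, mul_comm] using norm_le_mul_exp_abs_of_hasDerivAt
      (hT.hasDerivAt q x) (fun t => (A t).le_of_opNorm_le (hA t) _) q r

theorem continuous_left (hT : IsEvolutionOperator A T) (hA : ∀ t, ‖A t‖ ≤ M) (q : ℝ) :
    Continuous fun r => T r q := by
  have hM : 0 ≤ M := (norm_nonneg _).trans (hA 0)
  refine continuous_iff_continuousAt.2 fun p => continuousAt_of_hasDerivAt_apply one_pos
    (G := fun t => A t * T t q) (C := M * Real.exp (M * (|p - q| + 1)))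
    (fun x t _ => hT.hasDerivAt q x t) fun t ht => ?_
  have htq : |t - q| ≤ |p - q| + 1 := by
    have := abs_sub_le t p q
    rw [mem_ball, Real.dist_eq] at ht
    linarith
  calc ‖A t * T t q‖ ≤ ‖A t‖ * ‖T t q‖ := norm_mul_le _ _
    _ ≤ M * Real.exp (M * |t - q|) := mul_le_mul (hA t) (hT.norm_le_exp hA t q) (norm_nonneg _) hM
    _ ≤ M * Real.exp (M * (|p - q| + 1)) := by gcongr

variable [CompleteSpace X]

theorem hasDerivAt_left (hT : IsEvolutionOperator A T) (hAc : Continuous A)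
    (hA : ∀ t, ‖A t‖ ≤ M) (q p : ℝ) : HasDerivAt (fun r => T r q) (A p * T p q) p :=
  hasDerivAt_of_hasDerivAt_apply (hAc.mul (hT.continuous_left hA q))
    (fun x t => hT.hasDerivAt q x t) p

theorem hasDerivAt_right (hT : IsEvolutionOperator A T) (hAc : Continuous A)
    (hA : ∀ t, ‖A t‖ ≤ M) (q p : ℝ) : HasDerivAt (fun r => T q r) (-(T q p * A p)) p := by
  let e : ℝ → (X →L[ℝ] X)ˣ := fun r =>
    ⟨T r q, T q r, hT.mul_swap_eq_one hA r q, hT.mul_swap_eq_one hA q r⟩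
  have hinv : (fun r => T q r) = fun r => Ring.inverse (T r q) :=
    funext fun r => (Ring.inverse_unit (e r)).symm
  rw [hinv]
  refine ((hasFDerivAt_ringInverse (e p)).comp_hasDerivAt p
    (hT.hasDerivAt_left hAc hA q p)).congr_deriv ?_
  change -(T q p * (A p * T p q) * T q p) = -(T q p * A p)
  rw [mul_assoc, mul_assoc, hT.mul_swap_eq_one hA p q, mul_one]

end IsEvolutionOperator

end Evolution

section Cocycle

variable {R : Type*} [SeminormedRing R] {S : ℝ → ℝ → R} {P γ h : ℝ}

theorem norm_le_pow_mul_exp_of_cocycle (hS : ∀ p q r, S p q * S q r = S p r) (hP : 1 ≤ P)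
    (hh : 0 ≤ h) (hshort : ∀ s t, s ≤ t → t - s ≤ h → ‖S t s‖ ≤ P * Real.exp (γ * (t - s)))
    (n : ℕ) {s t : ℝ} (hst : s ≤ t) (hn : t - s ≤ (n + 1) * h) :
    ‖S t s‖ ≤ P ^ (n + 1) * Real.exp (γ * (t - s)) := by
  induction n generalizing t with
  | zero => simpa using hshort s t hst (by simpa using hn)
  | succ n ih =>
    by_cases hth : t - s ≤ h
    · refine (hshort s t hst hth).trans ?_
      gcongr
      exact le_self_pow₀ hP (by omega)
    have hsm : s ≤ t - h := by linarith
    calc ‖S t s‖ = ‖S t (t - h) * S (t - h) s‖ := by rw [hS]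
      _ ≤ ‖S t (t - h)‖ * ‖S (t - h) s‖ := norm_mul_le _ _
      _ ≤ (P * Real.exp (γ * (t - (t - h)))) * (P ^ (n + 1) * Real.exp (γ * (t - h - s))) := by
        gcongr
        · exact hshort _ _ (by linarith) (by linarith)
        · exact ih hsm (by push_cast at hn; linarith)
      _ = P ^ (n + 1 + 1) * Real.exp (γ * (t - s)) := by
        rw [mul_mul_mul_comm, ← pow_succ', ← Real.exp_add]
        ring_nf

theorem norm_le_mul_exp_of_cocycle (hS : ∀ p q r, S p q * S q r = S p r) (hP : 1 ≤ P)
    (hh : 0 < h) (hshort : ∀ s t, s ≤ t → t - s ≤ h → ‖S t s‖ ≤ P * Real.exp (γ * (t - s)))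
    {s t : ℝ} (hst : s ≤ t) :
    ‖S t s‖ ≤ P * Real.exp ((γ + Real.log P / h) * (t - s)) := by
  set n := ⌊(t - s) / h⌋₊
  have hn : t - s ≤ (n + 1) * h := by
    have := Nat.lt_floor_add_one ((t - s) / h)
    rw [div_lt_iff₀ hh] at this
    linarith
  have hPn : P ^ n ≤ Real.exp (Real.log P / h * (t - s)) := by
    rw [← Real.exp_log (pow_pos (by linarith) n), Real.log_pow]
    refine Real.exp_le_exp.2 ?_
    calc n * Real.log P ≤ (t - s) / h * Real.log P :=
          mul_le_mul_of_nonneg_right (Nat.floor_le (by positivity)) (Real.log_nonneg hP)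
      _ = Real.log P / h * (t - s) := by ring
  calc ‖S t s‖ ≤ P ^ (n + 1) * Real.exp (γ * (t - s)) :=
        norm_le_pow_mul_exp_of_cocycle hS hP hh.le hshort n hst hn
    _ = P * (P ^ n * Real.exp (γ * (t - s))) := by ring
    _ ≤ P * (Real.exp (Real.log P / h * (t - s)) * Real.exp (γ * (t - s))) := by gcongr
    _ = P * Real.exp ((γ + Real.log P / h) * (t - s)) := by rw [← Real.exp_add]; ring_nf

end Cocycle

section Perturbation

variable {X : Type*} [NormedAddCommGroup X] [NormedSpace ℝ X] [CompleteSpace X]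
  {A B : ℝ → X →L[ℝ] X} {T S : ℝ → ℝ → X →L[ℝ] X} {M : ℝ}

theorem IsEvolutionOperator.perturbation_formula (hT : IsEvolutionOperator A T)
    (hS : IsEvolutionOperator (fun t => A t + B t) S) (hAc : Continuous A) (hBc : Continuous B)
    (hA : ∀ t, ‖A t‖ ≤ M) (hB : ∀ t, ‖B t‖ ≤ M) (s t : ℝ) :
    S t s = T t s * (1 + ∫ r in s..t, B r) +
      ∫ u in s..t, T t u * ((∫ r in u..t, B r) * (A u + B u) - A u * ∫ r in u..t, B r) * S u s := by
  set c : ℝ → X →L[ℝ] X := fun u => ∫ r in u..t, B r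
  have hc : ∀ u, HasDerivAt c (-B u) u := fun u =>
    intervalIntegral.integral_hasDerivAt_left (hBc.intervalIntegrable _ _)
      hBc.aestronglyMeasurable.stronglyMeasurableAtFilter hBc.continuousAt
  have hAB : ∀ u, ‖A u + B u‖ ≤ M + M := fun u => norm_add_le_of_le (hA u) (hB u)
  have hZ : ∀ u, HasDerivAt (fun u => T t u * (1 + c u) * S u s)
      (T t u * (c u * (A u + B u) - A u * c u) * S u s) u := fun u => by
    refine (((hT.hasDerivAt_right hAc hA t u).fun_mul ((hc u).const_add 1)).fun_mul
      (hS.hasDerivAt_left (hAc.add hBc) hAB s u)).congr_deriv ?_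
    noncomm_ring
  have hTc : Continuous fun u => T t u :=
    continuous_iff_continuousAt.2 fun u => (hT.hasDerivAt_right hAc hA t u).continuousAt
  have hcc : Continuous c := continuous_iff_continuousAt.2 fun u => (hc u).continuousAt
  have hSc : Continuous fun u => S u s := hS.continuous_left hAB s
  rw [intervalIntegral.integral_eq_sub_of_hasDerivAt (fun u _ => hZ u)
    ((by fun_prop : Continuous _).intervalIntegrable s t)]
  simp [c, hT.self_eq_one, hS.self_eq_one]

theorem IsEvolutionOperator.norm_perturbed_le_integral (hT : IsEvolutionOperator A T)
    (hS : IsEvolutionOperator (fun t => A t + B t) S) (hAc : Continuous A) (hBc : Continuous B)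
    (hA : ∀ t, ‖A t‖ ≤ M) (hB : ∀ t, ‖B t‖ ≤ M) {K α δ h : ℝ} (hK : 0 ≤ K) (hδ : 0 ≤ δ)
    (hTK : ∀ s t, s ≤ t → ‖T t s‖ ≤ K * Real.exp (α * (t - s)))
    (hBδ : ∀ t₁ t₂ : ℝ, |t₂ - t₁| ≤ h → ‖∫ t in t₁..t₂, B t‖ ≤ δ)
    {s t : ℝ} (hst : s ≤ t) (hth : t - s ≤ h) :
    ‖S t s‖ ≤ Real.exp (α * (t - s)) * ((1 + δ) * K +
      3 * M * K * δ * ∫ u in s..t, Real.exp (-(α * (u - s))) * ‖S u s‖) := by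
  have hM : 0 ≤ M := (norm_nonneg _).trans (hA 0)
  have hAB : ∀ u, ‖A u + B u‖ ≤ M + M := fun u => norm_add_le_of_le (hA u) (hB u)
  have hc : ∀ u ∈ Icc s t, ‖∫ r in u..t, B r‖ ≤ δ := fun u hu =>
    hBδ u t (by rw [abs_of_nonneg (by linarith [hu.2])]; linarith [hu.1])
  have hcom : ∀ u ∈ Icc s t,
      ‖(∫ r in u..t, B r) * (A u + B u) - A u * ∫ r in u..t, B r‖ ≤ 3 * M * δ := fun u hu =>
    calc _ ≤ ‖∫ r in u..t, B r‖ * ‖A u + B u‖ + ‖A u‖ * ‖∫ r in u..t, B r‖ :=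
          norm_sub_le_of_le (norm_mul_le _ _) (norm_mul_le _ _)
      _ ≤ δ * (M + M) + M * δ := by gcongr <;> first | exact hc u hu | exact hAB u | exact hA u
      _ = 3 * M * δ := by ring
  have hintegrand : ∀ u ∈ Icc s t,
      ‖T t u * ((∫ r in u..t, B r) * (A u + B u) - A u * ∫ r in u..t, B r) * S u s‖ ≤
        Real.exp (α * (t - s)) * (3 * M * K * δ * (Real.exp (-(α * (u - s))) * ‖S u s‖)) :=
    fun u hu => calc
      _ ≤ ‖T t u‖ * ‖(∫ r in u..t, B r) * (A u + B u) - A u * ∫ r in u..t, B r‖ * ‖S u s‖ :=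
        norm_mul₃_le
      _ ≤ K * Real.exp (α * (t - u)) * (3 * M * δ) * ‖S u s‖ := by
        gcongr
        exacts [hTK u t hu.2, hcom u hu]
      _ = _ := by
        rw [show α * (t - u) = α * (t - s) + -(α * (u - s)) by ring, Real.exp_add]
        ring
  have hSc : Continuous fun u => S u s := hS.continuous_left hAB s
  have hintegral := intervalIntegral.norm_integral_le_of_norm_le (μ := MeasureTheory.volume) hst
    (Filter.Eventually.of_forall fun u hu => hintegrand u (Ioc_subset_Icc_self hu))
    ((by fun_prop : Continuous _).intervalIntegrable _ _)
  rw [intervalIntegral.integral_const_mul, intervalIntegral.integral_const_mul] at hintegral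
  rw [hT.perturbation_formula hS hAc hBc hA hB s t]
  calc _ ≤ ‖T t s‖ * ‖1 + ∫ r in s..t, B r‖ + _ := norm_add_le_of_le (norm_mul_le _ _) hintegral
    _ ≤ K * Real.exp (α * (t - s)) * (1 + δ) + _ := by
      gcongr
      · exact hTK s t hst
      · exact norm_add_le_of_le ContinuousLinearMap.norm_id_le (hc s ⟨le_rfl, hst⟩)
    _ = _ := by ring

theorem IsEvolutionOperator.norm_perturbed_le (hT : IsEvolutionOperator A T)
    (hS : IsEvolutionOperator (fun t => A t + B t) S) (hAc : Continuous A) (hBc : Continuous B)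
    (hA : ∀ t, ‖A t‖ ≤ M) (hB : ∀ t, ‖B t‖ ≤ M) {K α δ h : ℝ} (hK : 0 ≤ K) (hδ : 0 ≤ δ)
    (hTK : ∀ s t, s ≤ t → ‖T t s‖ ≤ K * Real.exp (α * (t - s)))
    (hBδ : ∀ t₁ t₂ : ℝ, |t₂ - t₁| ≤ h → ‖∫ t in t₁..t₂, B t‖ ≤ δ)
    {s t : ℝ} (hst : s ≤ t) (hth : t - s ≤ h) :
    ‖S t s‖ ≤ (1 + δ) * K * Real.exp ((α + 3 * M * K * δ) * (t - s)) := by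
  have hM : 0 ≤ M := (norm_nonneg _).trans (hA 0)
  set L := 3 * M * K * δ
  set N : ℝ → ℝ := fun u => Real.exp (-(α * (u - s))) * ‖S u s‖
  have hNc : Continuous N := by
    have := hS.continuous_left (fun u => norm_add_le_of_le (hA u) (hB u)) s
    fun_prop
  have hSN : ∀ u, ‖S u s‖ = Real.exp (α * (u - s)) * N u := fun u => by
    simp [N, Real.exp_neg]
  have hN : ∀ u ∈ Icc s t, N u ≤ (1 + δ) * K + L * ∫ r in s..u, N r := fun u hu => by
    have := hT.norm_perturbed_le_integral hS hAc hBc hA hB hK hδ hTK hBδ hu.1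
      (by linarith [hu.2])
    rw [hSN] at this
    exact le_of_mul_le_mul_left this (Real.exp_pos _)
  calc ‖S t s‖ = Real.exp (α * (t - s)) * N t := hSN t
    _ ≤ Real.exp (α * (t - s)) * ((1 + δ) * K * Real.exp (L * (t - s))) := by
      gcongr
      exact le_mul_exp_of_le_add_mul_integral hNc (by positivity) hst hN
    _ = (1 + δ) * K * Real.exp ((α + L) * (t - s)) := by
      rw [show (α + L) * (t - s) = α * (t - s) + L * (t - s) by ring, Real.exp_add]
      ring

end Perturbation

theorem stmt0_general {X : Type*} [NormedAddCommGroup X] [NormedSpace ℝ X] [CompleteSpace X]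
    (A B : ℝ → X →L[ℝ] X) (hAc : Continuous A) (hBc : Continuous B)
    (M K α δ h : ℝ) (hK : 1 ≤ K) (hδ : 0 < δ) (hh : 0 < h)
    (hAb : ∀ t, ‖A t‖ ≤ M) (hBb : ∀ t, ‖B t‖ ≤ M)
    (T S : ℝ → ℝ → X →L[ℝ] X)
    (hT0 : ∀ s, T s s = 1)
    (hTderiv : ∀ s (x : X) (t : ℝ), HasDerivAt (fun r => T r s x) (A t (T t s x)) t)
    (hTbound : ∀ s t, s ≤ t → ‖T t s‖ ≤ K * Real.exp (α * (t - s)))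
    (hBint : ∀ t₁ t₂ : ℝ, |t₂ - t₁| ≤ h → ‖∫ t in t₁..t₂, B t‖ ≤ δ)
    (hS0 : ∀ s, S s s = 1)
    (hSderiv : ∀ s (x : X) (t : ℝ),
      HasDerivAt (fun r => S r s x) (A t (S t s x) + B t (S t s x)) t) :
    ∀ s t, s ≤ t →
      ‖S t s‖ ≤ (1 + δ) * K *
        Real.exp ((α + 3 * M * K * δ + Real.log ((1 + δ) * K) / h) * (t - s)) := by
  intro s t hst
  have hT : IsEvolutionOperator A T := ⟨hT0, hTderiv⟩
  have hS : IsEvolutionOperator (fun t => A t + B t) S := ⟨hS0, hSderiv⟩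
  have hAB : ∀ t, ‖A t + B t‖ ≤ M + M := fun t => norm_add_le_of_le (hAb t) (hBb t)
  have hP : 1 ≤ (1 + δ) * K := by nlinarith
  exact norm_le_mul_exp_of_cocycle (hS.cocycle hAB) hP hh
    (fun s t hst hth => hT.norm_perturbed_le hS hAc hBc hAb hBb (by linarith) hδ.le hTbound hBint
      hst hth) hst

/-- Coppel-type robustness, bounded case.
If `T` is the evolution operator of `ẋ = A(t)x`, with `‖T(t,s)‖ ≤ K e^{α(t-s)}`
for `t ≥ s`, and `B` is integrally small (`‖∫_{t₁}^{t₂} B‖ ≤ δ` whenever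
`|t₂ - t₁| ≤ h`), then the evolution operator `S` of `ẏ = A(t)y + B(t)y`
satisfies `‖S(t,s)‖ ≤ (1+δ) K e^{β (t-s)}` for `t ≥ s`, where
`β = α + 3MKδ + log((1+δ)K)/h`. -/
theorem stmt0 {X : Type*} [NormedAddCommGroup X] [NormedSpace ℝ X] [CompleteSpace X]
    (A B : ℝ → X →L[ℝ] X) (hAc : Continuous A) (hBc : Continuous B)
    (M K α δ h : ℝ) (hM : 0 < M) (hK : 1 ≤ K) (hδ : 0 < δ) (hh : 0 < h)
    (hAb : ∀ t, ‖A t‖ ≤ M) (hBb : ∀ t, ‖B t‖ ≤ M)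
    (T S : ℝ → ℝ → X →L[ℝ] X)
    (hT0 : ∀ s, T s s = 1)
    (hTderiv : ∀ s (x : X) (t : ℝ), HasDerivAt (fun r => T r s x) (A t (T t s x)) t)
    (hTbound : ∀ s t, s ≤ t → ‖T t s‖ ≤ K * Real.exp (α * (t - s)))
    (hBint : ∀ t₁ t₂ : ℝ, |t₂ - t₁| ≤ h → ‖∫ t in t₁..t₂, B t‖ ≤ δ)
    (hS0 : ∀ s, S s s = 1)
    (hSderiv : ∀ s (x : X) (t : ℝ),
      HasDerivAt (fun r => S r s x) (A t (S t s x) + B t (S t s x)) t) :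
    ∀ s t, s ≤ t →
      ‖S t s‖ ≤ (1 + δ) * K *
        Real.exp ((α + 3 * M * K * δ + Real.log ((1 + δ) * K) / h) * (t - s)) :=
  stmt0_general A B hAc hBc M K α δ h hK hδ hh hAb hBb T S hT0 hTderiv hTbound hBint hS0 hSderiv
end

section
/- Let A, B : ℝ → L(X) be continuous with ‖A(t)‖ ≤ M, ‖B(t)‖ ≤ M, B a generalized almost periodic function with mean value zero, and suppose the evolution operator T(t,s) of ẋ = A(t)x satisfies ‖T(t,s)‖ ≤ Ke^{−α(t−s)} for t ≥ s with α > 0, K ≥ 1. Then there exist K̃ and ω₀ > 0 such that for all ω > ω₀ the evolution operator S_ω(t,s) of ẋ = A(t)x + B(ωt)x satisfies ‖S_ω(t,s)‖ ≤ K̃ e^{−(α/2)(t−s)} for t ≥ s. -/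
/-!
On a window `[s, s + L]` compare the perturbed flow `x` with the unperturbed flow `y` from the
same initial value: Gronwall applied to `x - y - ∫ₛ B(ωu) x(u) du` shows that `x - y` is
controlled by that primitive. Cutting the window into pieces of length `η` and freezing `x` at
the left end of each piece bounds the primitive by `((ε + 2M²η)L + Mη) e^{2ML} ‖x(s)‖`, where
`εη` bounds every `∫ₐ^{a+η} B(ωu) du`; after the substitution `u ↦ ωu`, the zero mean of `B`
makes `ε` as small as we like once `ω` is large. Choosing `L` with `K e^{-αL} = 1/(4K)` and then
`η, ε` small, the perturbed flow contracts by `1/(2K) = e^{-αL/2}` over every window, and the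
cocycle property turns this into exponential decay at rate `α/2`.
-/


open Set Real

section

variable {E : Type*} [NormedAddCommGroup E] [NormedSpace ℝ E]

structure IsEvolutionOperator_s10 (F : ℝ → E →L[ℝ] E) (U : ℝ → ℝ → E →L[ℝ] E) : Prop where
  apply_self : ∀ s, U s s = 1
  hasDerivAt : ∀ s x t, HasDerivAt (fun r => U r s x) (F t (U t s x)) t

theorem gronwallBound_δ0_mul (K ρ x : ℝ) :
    gronwallBound 0 K (K * ρ) x = ρ * (exp (K * x) - 1) := by
  rcases eq_or_ne K 0 with rfl | hK
  · simp [gronwallBound_K0]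
  · rw [gronwallBound_of_K_ne_0 hK]
    field_simp
    ring

theorem norm_le_mul_exp_of_hasDerivAt_s10 {F : ℝ → E →L[ℝ] E} {z : ℝ → E} {c s t : ℝ}
    (hF : ∀ t, ‖F t‖ ≤ c) (hz : ∀ t, HasDerivAt z (F t (z t)) t) (hst : s ≤ t) :
    ‖z t‖ ≤ ‖z s‖ * exp (c * (t - s)) := by
  have h := norm_le_gronwallBound_of_norm_deriv_right_le (δ := ‖z s‖) (ε := 0)
    (fun u _ => (hz u).continuousAt.continuousWithinAt) (fun u _ => (hz u).hasDerivWithinAt)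
    le_rfl (fun u _ => by simpa using (F u).le_of_opNorm_le (hF u) (z u)) t ⟨hst, le_rfl⟩
  rwa [gronwallBound_ε0] at h

theorem linear_ODE_solution_unique {F : ℝ → E →L[ℝ] E} {f g : ℝ → E} {c a b : ℝ}
    (hF : ∀ t, ‖F t‖ ≤ c) (hf : ∀ t, HasDerivAt f (F t (f t)) t)
    (hg : ∀ t, HasDerivAt g (F t (g t)) t) (hab : a ≤ b) (ha : f a = g a) : f b = g b := by
  have hlip : ∀ t, LipschitzWith c.toNNReal (F t) := fun t =>
    (F t).lipschitz.weaken (by simpa [← NNReal.coe_le_coe] using (hF t).trans (le_max_left c 0))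
  exact ODE_solution_unique hlip (fun u _ => (hf u).continuousAt.continuousWithinAt)
    (fun u _ => (hf u).hasDerivWithinAt) (fun u _ => (hg u).continuousAt.continuousWithinAt)
    (fun u _ => (hg u).hasDerivWithinAt) ha ⟨hab, le_rfl⟩

namespace IsEvolutionOperator_s10

variable {F : ℝ → E →L[ℝ] E} {U : ℝ → ℝ → E →L[ℝ] E} {c : ℝ}

theorem mul_eq (hU : IsEvolutionOperator_s10 F U) (hF : ∀ t, ‖F t‖ ≤ c) {s u t : ℝ} (hut : u ≤ t) :
    U t u * U u s = U t s := by
  ext x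
  exact linear_ODE_solution_unique hF (fun r => hU.hasDerivAt u (U u s x) r)
    (fun r => hU.hasDerivAt s x r) hut (by simp [hU.apply_self])

theorem norm_le_exp_s10 (hU : IsEvolutionOperator_s10 F U) (hF : ∀ t, ‖F t‖ ≤ c) {s t : ℝ}
    (hst : s ≤ t) : ‖U t s‖ ≤ exp (c * (t - s)) :=
  (U t s).opNorm_le_bound (exp_pos _).le fun x => by
    simpa [hU.apply_self, mul_comm] using norm_le_mul_exp_of_hasDerivAt_s10 hF (hU.hasDerivAt s x) hst

end IsEvolutionOperator_s10

section Averaging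

variable {F : Type*} [NormedAddCommGroup F] [NormedSpace ℝ F]
  {f : ℝ → E →L[ℝ] F} {z : ℝ → E} {M : ℝ}

theorem norm_integral_apply_le (hf : Continuous f) (hz : Continuous z) (hfM : ∀ u, ‖f u‖ ≤ M)
    {a b δ : ℝ} (hab : a ≤ b) (hδ : ∀ u ∈ Icc a b, ‖z u - z a‖ ≤ δ) :
    ‖∫ u in a..b, f u (z u)‖ ≤ ‖∫ u in a..b, f u‖ * ‖z a‖ + M * δ * (b - a) := by
  have hsplit : ∫ u in a..b, f u (z u) =
      (∫ u in a..b, f u) (z a) + ∫ u in a..b, f u (z u - z a) :=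
    calc ∫ u in a..b, f u (z u) = ∫ u in a..b, (f u (z a) + f u (z u - z a)) := by simp
      _ = (∫ u in a..b, f u (z a)) + ∫ u in a..b, f u (z u - z a) :=
        intervalIntegral.integral_add ((hf.clm_apply continuous_const).intervalIntegrable a b)
          ((hf.clm_apply (hz.sub continuous_const)).intervalIntegrable a b)
      _ = _ := by rw [ContinuousLinearMap.intervalIntegral_apply (hf.intervalIntegrable a b)]
  have hrest : ‖∫ u in a..b, f u (z u - z a)‖ ≤ M * δ * (b - a) := by
    have := intervalIntegral.norm_integral_le_of_norm_le_const (C := M * δ)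
      (f := fun u => f u (z u - z a)) (a := a) (b := b) fun u hu => by
        rw [uIoc_of_le hab] at hu
        exact (f u).le_of_opNorm_le (hfM u) _ |>.trans
          (mul_le_mul_of_nonneg_left (hδ u (Ioc_subset_Icc_self hu))
            ((norm_nonneg _).trans (hfM u)))
    rwa [abs_of_nonneg (sub_nonneg.2 hab)] at this
  rw [hsplit]
  exact (norm_add_le _ _).trans
    (add_le_add (ContinuousLinearMap.le_opNorm _ _) hrest)

theorem norm_integral_apply_le_nat_mul (hf : Continuous f) (hz : Continuous z)
    (hfM : ∀ u, ‖f u‖ ≤ M) {ε η : ℝ} (hη : 0 < η)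
    (havg : ∀ a, ‖∫ u in a..a + η, f u‖ ≤ ε * η) {R Λ s t : ℝ} (hΛ : 0 ≤ Λ)
    (hzR : ∀ u ∈ Icc s t, ‖z u‖ ≤ R)
    (hzΛ : ∀ a ∈ Icc s t, ∀ u ∈ Icc a t, ‖z u - z a‖ ≤ Λ * (u - a)) (k : ℕ)
    (hk : s + k * η ≤ t) :
    ‖∫ u in s..s + k * η, f u (z u)‖ ≤ k * η * (ε * R + M * Λ * η) := by
  induction k with
  | zero => simp
  | succ k ih =>
    push_cast at hk ⊢
    set a := s + k * η
    have hsa : s ≤ a := le_add_of_nonneg_right (by positivity)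
    have hat : a + η ≤ t := by linarith
    have hwin := norm_integral_apply_le hf hz hfM (δ := Λ * η) (le_add_of_nonneg_right hη.le)
      fun u hu => (hzΛ a ⟨hsa, by linarith⟩ u ⟨hu.1, hu.2.trans hat⟩).trans
        (mul_le_mul_of_nonneg_left (by linarith [hu.2]) hΛ)
    rw [add_sub_cancel_left] at hwin
    rw [show s + (k + 1) * η = a + η by ring,
      ← intervalIntegral.integral_add_adjacent_intervals ((hf.clm_apply hz).intervalIntegrable _ _)
        ((hf.clm_apply hz).intervalIntegrable _ _)]
    calc _ ≤ ‖∫ u in s..a, f u (z u)‖ + ‖∫ u in a..a + η, f u (z u)‖ := norm_add_le _ _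
      _ ≤ k * η * (ε * R + M * Λ * η) + (ε * η * R + M * (Λ * η) * η) := by
        refine add_le_add (ih (by linarith)) (hwin.trans (add_le_add ?_ le_rfl))
        exact mul_le_mul (havg a) (hzR a ⟨hsa, by linarith⟩) (norm_nonneg _)
          ((norm_nonneg _).trans (havg a))
      _ = (k + 1) * η * (ε * R + M * Λ * η) := by ring

theorem norm_integral_apply_le_of_forall_norm_integral_le (hf : Continuous f) (hz : Continuous z)
    (hfM : ∀ u, ‖f u‖ ≤ M) {ε η : ℝ} (hη : 0 < η)
    (havg : ∀ a, ‖∫ u in a..a + η, f u‖ ≤ ε * η) {R Λ s t : ℝ} (hΛ : 0 ≤ Λ) (hst : s ≤ t)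
    (hzR : ∀ u ∈ Icc s t, ‖z u‖ ≤ R)
    (hzΛ : ∀ a ∈ Icc s t, ∀ u ∈ Icc a t, ‖z u - z a‖ ≤ Λ * (u - a)) :
    ‖∫ u in s..t, f u (z u)‖ ≤ (t - s) * (ε * R + M * Λ * η) + M * R * η := by
  have hM : 0 ≤ M := (norm_nonneg _).trans (hfM 0)
  have hR : 0 ≤ R := (norm_nonneg _).trans (hzR s ⟨le_rfl, hst⟩)
  have hε : 0 ≤ ε := nonneg_of_mul_nonneg_left ((norm_nonneg _).trans (havg 0)) hη
  set k := ⌊(t - s) / η⌋₊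
  set a := s + k * η
  have hka : k * η ≤ t - s := (le_div_iff₀ hη).1 (Nat.floor_le (div_nonneg (by linarith) hη.le))
  have hta : t - a < η := by
    have := (div_lt_iff₀ hη).1 (Nat.lt_floor_add_one ((t - s) / η))
    linarith
  have hsa : s ≤ a := le_add_of_nonneg_right (by positivity)
  have hat : a ≤ t := by linarith
  have htail : ‖∫ u in a..t, f u (z u)‖ ≤ M * R * |t - a| :=
    intervalIntegral.norm_integral_le_of_norm_le_const fun u hu => by
      rw [uIoc_of_le hat] at hu
      exact (f u).le_of_opNorm_le (hfM u) _ |>.trans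
        (mul_le_mul_of_nonneg_left (hzR u ⟨hsa.trans hu.1.le, hu.2⟩) hM)
  rw [abs_of_nonneg (sub_nonneg.2 hat)] at htail
  rw [← intervalIntegral.integral_add_adjacent_intervals ((hf.clm_apply hz).intervalIntegrable _ _)
    ((hf.clm_apply hz).intervalIntegrable _ _)]
  calc _ ≤ ‖∫ u in s..a, f u (z u)‖ + ‖∫ u in a..t, f u (z u)‖ := norm_add_le _ _
    _ ≤ k * η * (ε * R + M * Λ * η) + M * R * η :=
      add_le_add (norm_integral_apply_le_nat_mul hf hz hfM hη havg hΛ hzR hzΛ k hat)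
        (htail.trans (by gcongr))
    _ ≤ (t - s) * (ε * R + M * Λ * η) + M * R * η := by gcongr

end Averaging

theorem norm_sub_le_of_norm_primitive_le [CompleteSpace E] {A : ℝ → E →L[ℝ] E} {g z w : ℝ → E}
    {M ρ s t : ℝ} (hA : ∀ t, ‖A t‖ ≤ M) (hg : Continuous g)
    (hz : ∀ t, HasDerivAt z (A t (z t) + g t) t) (hw : ∀ t, HasDerivAt w (A t (w t)) t)
    (hzw : z s = w s) (hst : s ≤ t) (hρ : ∀ u ∈ Icc s t, ‖∫ r in s..u, g r‖ ≤ ρ) :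
    ‖z t - w t‖ ≤ ρ * exp (M * (t - s)) := by
  have hM : 0 ≤ M := (norm_nonneg _).trans (hA 0)
  set I := fun u => ∫ r in s..u, g r
  have hI : ∀ u, HasDerivAt I (g u) u := fun u =>
    intervalIntegral.integral_hasDerivAt_right (hg.intervalIntegrable _ _)
      hg.stronglyMeasurable.stronglyMeasurableAtFilter hg.continuousAt
  -- `e = z - w - I` solves `e' = A e + A I` with `e s = 0`, and `A I` is small.
  set e := fun u => z u - w u - I u
  have he : ∀ u, HasDerivAt e (A u (e u) + A u (I u)) u := fun u => by
    refine (((hz u).sub (hw u)).sub (hI u)).congr_deriv ?_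
    simp only [e, map_sub]
    abel
  have hes : ‖e s‖ ≤ 0 := by simp [e, I, hzw]
  have hgron := norm_le_gronwallBound_of_norm_deriv_right_le
    (fun u _ => (he u).continuousAt.continuousWithinAt) (fun u _ => (he u).hasDerivWithinAt) hes
    (fun u hu => (norm_add_le _ _).trans (add_le_add ((A u).le_of_opNorm_le (hA u) _)
      (((A u).le_of_opNorm_le (hA u) _).trans
        (mul_le_mul_of_nonneg_left (hρ u ⟨hu.1, hu.2.le⟩) hM))))
    t ⟨hst, le_rfl⟩
  rw [gronwallBound_δ0_mul] at hgron
  calc ‖z t - w t‖ = ‖e t + I t‖ := by simp [e]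
    _ ≤ ‖e t‖ + ‖I t‖ := norm_add_le _ _
    _ ≤ ρ * (exp (M * (t - s)) - 1) + ρ := add_le_add hgron (hρ t ⟨hst, le_rfl⟩)
    _ = ρ * exp (M * (t - s)) := by ring

theorem norm_sub_le_of_forall_norm_integral_le [CompleteSpace E] {A f : ℝ → E →L[ℝ] E}
    {z w : ℝ → E} {M ε η s t : ℝ} (hA : ∀ t, ‖A t‖ ≤ M) (hfM : ∀ t, ‖f t‖ ≤ M)
    (hf : Continuous f) (hη : 0 < η) (havg : ∀ a, ‖∫ u in a..a + η, f u‖ ≤ ε * η)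
    (hz : ∀ t, HasDerivAt z (A t (z t) + f t (z t)) t) (hw : ∀ t, HasDerivAt w (A t (w t)) t)
    (hzw : z s = w s) (hst : s ≤ t) :
    ‖z t - w t‖ ≤ ((t - s) * (ε + 2 * M ^ 2 * η) + M * η) * exp (3 * M * (t - s)) * ‖z s‖ := by
  have hM : 0 ≤ M := (norm_nonneg _).trans (hA 0)
  have hε : 0 ≤ ε := nonneg_of_mul_nonneg_left ((norm_nonneg _).trans (havg 0)) hη
  have hAf : ∀ u, ‖A u + f u‖ ≤ 2 * M := fun u => by
    linarith [norm_add_le (A u) (f u), hA u, hfM u]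
  have hz' : ∀ u, HasDerivAt z ((A u + f u) (z u)) u := hz
  have hzc : Continuous z := continuous_iff_continuousAt.2 fun u => (hz u).continuousAt
  set R := ‖z s‖ * exp (2 * M * (t - s))
  have hR : ∀ u ∈ Icc s t, ‖z u‖ ≤ R := fun u hu =>
    (norm_le_mul_exp_of_hasDerivAt_s10 hAf hz' hu.1).trans
      (by simp only [R]; gcongr; exact hu.2)
  have hlip : ∀ a ∈ Icc s t, ∀ u ∈ Icc a t, ‖z u - z a‖ ≤ 2 * M * R * (u - a) := fun a ha =>
    norm_image_sub_le_of_norm_deriv_le_segment' (fun u _ => (hz' u).hasDerivWithinAt)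
      fun u hu => ((A u + f u).le_of_opNorm_le (hAf u) _).trans
        (mul_le_mul_of_nonneg_left (hR u ⟨ha.1.trans hu.1, hu.2.le⟩) (by positivity))
  refine (norm_sub_le_of_norm_primitive_le (ρ := ((t - s) * (ε + 2 * M ^ 2 * η) + M * η) * R)
    hA (hf.clm_apply hzc) hz hw hzw hst fun u hu => ?_).trans_eq ?_
  · calc _ ≤ (u - s) * (ε * R + M * (2 * M * R) * η) + M * R * η :=
          norm_integral_apply_le_of_forall_norm_integral_le hf hzc hfM hη havg (by positivity) hu.1
            (fun v hv => hR v ⟨hv.1, hv.2.trans hu.2⟩)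
            fun a ha v hv => hlip a ⟨ha.1, ha.2.trans hu.2⟩ v ⟨hv.1, hv.2.trans hu.2⟩
      _ ≤ (t - s) * (ε * R + M * (2 * M * R) * η) + M * R * η := by gcongr; exact hu.2
      _ = _ := by ring
  · rw [show 3 * M * (t - s) = 2 * M * (t - s) + M * (t - s) by ring, exp_add]
    ring

theorem IsEvolutionOperator_s10.norm_sub_le [CompleteSpace E] {A f : ℝ → E →L[ℝ] E}
    {S T : ℝ → ℝ → E →L[ℝ] E} {M ε η s t : ℝ} (hS : IsEvolutionOperator_s10 (fun t => A t + f t) S)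
    (hT : IsEvolutionOperator_s10 A T) (hA : ∀ t, ‖A t‖ ≤ M) (hfM : ∀ t, ‖f t‖ ≤ M)
    (hf : Continuous f) (hη : 0 < η) (havg : ∀ a, ‖∫ u in a..a + η, f u‖ ≤ ε * η)
    (hst : s ≤ t) :
    ‖S t s - T t s‖ ≤ ((t - s) * (ε + 2 * M ^ 2 * η) + M * η) * exp (3 * M * (t - s)) := by
  have hM : 0 ≤ M := (norm_nonneg _).trans (hA 0)
  have hε : 0 ≤ ε := nonneg_of_mul_nonneg_left ((norm_nonneg _).trans (havg 0)) hη
  have hts : 0 ≤ t - s := sub_nonneg.2 hst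
  refine ContinuousLinearMap.opNorm_le_bound _ (by positivity) fun x => ?_
  simpa [hS.apply_self, hT.apply_self] using
    norm_sub_le_of_forall_norm_integral_le hA hfM hf hη havg (hS.hasDerivAt s x) (hT.hasDerivAt s x)
      (by simp [hS.apply_self, hT.apply_self]) hst

theorem exists_forall_norm_integral_comp_mul_le {f : ℝ → E}
    (hmean : ∀ ε > (0 : ℝ), ∃ T₀ > (0 : ℝ), ∀ T ≥ T₀, ∀ s : ℝ,
      ‖(1 / T) • ∫ u in s..(s + T), f u‖ ≤ ε)
    {ε η : ℝ} (hε : 0 < ε) (hη : 0 < η) :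
    ∃ ω₀ > (0 : ℝ), ∀ ω > ω₀, ∀ a, ‖∫ u in a..a + η, f (ω * u)‖ ≤ ε * η := by
  obtain ⟨T₀, hT₀, hmean⟩ := hmean ε hε
  refine ⟨T₀ / η, by positivity, fun ω hω a => ?_⟩
  have hω0 : 0 < ω := (div_pos hT₀ hη).trans hω
  have h := hmean (ω * η) ((div_lt_iff₀ hη).1 hω).le (ω * a)
  rw [norm_smul, one_div, norm_inv, Real.norm_of_nonneg (by positivity),
    inv_mul_le_iff₀ (by positivity)] at h
  rw [intervalIntegral.integral_comp_mul_left _ hω0.ne', norm_smul, norm_inv,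
    Real.norm_of_nonneg hω0.le, mul_add, inv_mul_le_iff₀ hω0]
  linarith

section Cocycle

variable {R : Type*} [SeminormedRing R] {U : ℝ → ℝ → R} {L C : ℝ}

theorem norm_le_mul_pow_of_mul_eq (hL : 0 ≤ L)
    (hmul : ∀ s u t, s ≤ u → u ≤ t → U t u * U u s = U t s)
    (hloc : ∀ s t, s ≤ t → t ≤ s + L → ‖U t s‖ ≤ C) {q : ℝ} (hstep : ∀ s, ‖U (s + L) s‖ ≤ q) :
    ∀ n : ℕ, ∀ s t, s + n * L ≤ t → t ≤ s + (n + 1) * L → ‖U t s‖ ≤ C * q ^ n := by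
  intro n
  induction n with
  | zero => intro s t h₁ h₂; simpa using hloc s t (by simpa using h₁) (by simpa using h₂)
  | succ n ih =>
    intro s t h₁ h₂
    push_cast at h₁ h₂
    have hnL : 0 ≤ n * L := by positivity
    have ih' := ih (s + L) t (by linarith) (by linarith)
    rw [← hmul s (s + L) t (by linarith) (by linarith)]
    calc ‖U t (s + L) * U (s + L) s‖ ≤ ‖U t (s + L)‖ * ‖U (s + L) s‖ := norm_mul_le _ _
      _ ≤ C * q ^ n * q := mul_le_mul ih' (hstep s) (norm_nonneg _) ((norm_nonneg _).trans ih')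
      _ = C * q ^ (n + 1) := by ring

theorem norm_le_mul_exp_of_mul_eq (hL : 0 < L)
    (hmul : ∀ s u t, s ≤ u → u ≤ t → U t u * U u s = U t s)
    (hloc : ∀ s t, s ≤ t → t ≤ s + L → ‖U t s‖ ≤ C) {β : ℝ} (hβ : 0 ≤ β)
    (hstep : ∀ s, ‖U (s + L) s‖ ≤ exp (-β * L)) {s t : ℝ} (hst : s ≤ t) :
    ‖U t s‖ ≤ C * exp (β * L) * exp (-β * (t - s)) := by
  set n := ⌊(t - s) / L⌋₊
  have hn₁ : n * L ≤ t - s :=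
    (le_div_iff₀ hL).1 (Nat.floor_le (div_nonneg (sub_nonneg.2 hst) hL.le))
  have hn₂ : t - s < (n + 1) * L := (div_lt_iff₀ hL).1 (Nat.lt_floor_add_one _)
  have hC : 0 ≤ C := (norm_nonneg _).trans (hloc s s le_rfl (by linarith))
  calc ‖U t s‖ ≤ C * exp (-β * L) ^ n :=
        norm_le_mul_pow_of_mul_eq hL.le hmul hloc hstep n s t (by linarith) (by linarith)
    _ = C * exp (-β * (n * L)) := by rw [← exp_nat_mul]; ring_nf
    _ ≤ C * exp (β * L + -β * (t - s)) := by gcongr; nlinarith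
    _ = C * exp (β * L) * exp (-β * (t - s)) := by rw [exp_add]; ring

end Cocycle

theorem IsEvolutionOperator_s10.norm_le_mul_exp {F : ℝ → E →L[ℝ] E} {U : ℝ → ℝ → E →L[ℝ] E}
    {c L β : ℝ} (hU : IsEvolutionOperator_s10 F U) (hF : ∀ t, ‖F t‖ ≤ c) (hL : 0 < L) (hβ : 0 ≤ β)
    (hstep : ∀ s, ‖U (s + L) s‖ ≤ exp (-β * L)) {s t : ℝ} (hst : s ≤ t) :
    ‖U t s‖ ≤ exp (c * L) * exp (β * L) * exp (-β * (t - s)) := by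
  have hc : 0 ≤ c := (norm_nonneg _).trans (hF 0)
  refine norm_le_mul_exp_of_mul_eq (U := U) (C := exp (c * L)) hL
    (fun _ _ _ _ hut => hU.mul_eq hF hut) (fun a b hab hbL => ?_) hβ hstep hst
  exact (hU.norm_le_exp_s10 hF hab).trans
    (exp_le_exp.2 (mul_le_mul_of_nonneg_left (by linarith) hc))

end

theorem stmt10_general {X : Type*} [NormedAddCommGroup X] [NormedSpace ℝ X] [CompleteSpace X]
    (A B : ℝ → X →L[ℝ] X) (hBc : Continuous B)
    (M K α : ℝ) (hK : 1 ≤ K) (hα : 0 < α)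
    (hAb : ∀ t, ‖A t‖ ≤ M) (hBb : ∀ t, ‖B t‖ ≤ M)
    (hBmean : ∀ ε > (0 : ℝ), ∃ T₀ > (0 : ℝ), ∀ T ≥ T₀, ∀ s : ℝ,
      ‖(1 / T) • ∫ u in s..(s + T), B u‖ ≤ ε)
    (T : ℝ → ℝ → X →L[ℝ] X)
    (hT0 : ∀ s, T s s = 1)
    (hTderiv : ∀ s (x : X) (t : ℝ), HasDerivAt (fun r => T r s x) (A t (T t s x)) t)
    (hTbound : ∀ s t, s ≤ t → ‖T t s‖ ≤ K * Real.exp (-α * (t - s)))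
    (S : ℝ → ℝ → ℝ → X →L[ℝ] X)
    (hS0 : ∀ ω s, S ω s s = 1)
    (hSderiv : ∀ (ω : ℝ) (s : ℝ) (x : X) (t : ℝ),
      HasDerivAt (fun r => S ω r s x) (A t (S ω t s x) + B (ω * t) (S ω t s x)) t) :
    ∃ K' : ℝ, ∃ ω₀ > (0 : ℝ), ∀ ω > ω₀, ∀ s t : ℝ, s ≤ t →
      ‖S ω t s‖ ≤ K' * Real.exp (-(α / 2) * (t - s)) := by
  -- `L` makes `e^{-αL/2} = 1/(2K)`; over such a window `T` contracts by `1/(4K)`, leaving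
  -- `1/(4K)` for the perturbation.
  set L := 2 / α * log (2 * K) with hL_def
  have hL : 0 < L := by have := log_pos (by linarith : 1 < 2 * K); positivity
  have hqL : exp (-(α / 2) * L) = (2 * K)⁻¹ := by
    rw [show -(α / 2) * L = -log (2 * K) by rw [hL_def]; field_simp, exp_neg, exp_log (by linarith)]
  have hTL : K * exp (-α * L) = (4 * K)⁻¹ := by
    rw [show -α * L = -(α / 2) * L + -(α / 2) * L by ring, exp_add, hqL]
    field_simp
    ring
  obtain ⟨η, hη, hηc⟩ :=
    exists_pos_mul_lt (by positivity : 0 < (4 * K)⁻¹) ((L * (1 + 2 * M ^ 2) + M) * exp (3 * M * L))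
  obtain ⟨ω₀, hω₀, havg⟩ := exists_forall_norm_integral_comp_mul_le hBmean hη hη
  refine ⟨exp (2 * M * L) * exp (α / 2 * L), ω₀, hω₀, fun ω hω s t hst => ?_⟩
  have hF : ∀ t, ‖A t + B (ω * t)‖ ≤ 2 * M := fun t =>
    (norm_add_le_of_le (hAb t) (hBb _)).trans_eq (two_mul M).symm
  have hS : IsEvolutionOperator_s10 (fun t => A t + B (ω * t)) (S ω) :=
    ⟨hS0 ω, fun s x t => by simpa using hSderiv ω s x t⟩
  have hT : IsEvolutionOperator_s10 A T := ⟨hT0, hTderiv⟩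
  refine hS.norm_le_mul_exp hF hL (by positivity) (fun a => ?_) hst
  have haL : a ≤ a + L := le_add_of_nonneg_right hL.le
  have hdev := hS.norm_sub_le hT hAb (fun t => hBb _) (hBc.comp (continuous_const_mul ω)) hη
    (havg ω hω) haL
  have hTa := hTbound a (a + L) haL
  rw [add_sub_cancel_left] at hdev hTa
  calc ‖S ω (a + L) a‖ ≤ ‖T (a + L) a‖ + ‖S ω (a + L) a - T (a + L) a‖ :=
        norm_le_norm_add_norm_sub' _ _
    _ ≤ (4 * K)⁻¹ + (4 * K)⁻¹ :=
        add_le_add (hTa.trans_eq hTL) (hdev.trans (by linarith [hηc]))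
    _ = exp (-(α / 2) * L) := by rw [hqL]; ring

/-- Let `A, B : ℝ → L(X)` be continuous with `‖A(t)‖ ≤ M`,
`‖B(t)‖ ≤ M`, `B` generalized almost periodic with mean value zero (uniformly
in the starting point), and suppose the evolution operator `T(t,s)` of
`ẋ = A(t)x` satisfies `‖T(t,s)‖ ≤ K e^{−α(t−s)}` for `t ≥ s`, with `α > 0`,
`K ≥ 1`. Then there exist `K̃` and `ω₀ > 0` such that for all `ω > ω₀` the
evolution operator `S_ω(t,s)` of `ẋ = A(t)x + B(ωt)x` satisfies
`‖S_ω(t,s)‖ ≤ K̃ e^{−(α/2)(t−s)}` for `t ≥ s`. -/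
theorem stmt10 {X : Type*} [NormedAddCommGroup X] [NormedSpace ℝ X] [CompleteSpace X]
    (A B : ℝ → X →L[ℝ] X) (hAc : Continuous A) (hBc : Continuous B)
    (M K α : ℝ) (hM : 0 < M) (hK : 1 ≤ K) (hα : 0 < α)
    (hAb : ∀ t, ‖A t‖ ≤ M) (hBb : ∀ t, ‖B t‖ ≤ M)
    (hBuc : UniformContinuous B)
    (hBrange : IsCompact (closure (Set.range B)))
    (hBmean : ∀ ε > (0 : ℝ), ∃ T₀ > (0 : ℝ), ∀ T ≥ T₀, ∀ s : ℝ,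
      ‖(1 / T) • ∫ u in s..(s + T), B u‖ ≤ ε)
    (T : ℝ → ℝ → X →L[ℝ] X)
    (hT0 : ∀ s, T s s = 1)
    (hTderiv : ∀ s (x : X) (t : ℝ), HasDerivAt (fun r => T r s x) (A t (T t s x)) t)
    (hTbound : ∀ s t, s ≤ t → ‖T t s‖ ≤ K * Real.exp (-α * (t - s)))
    (S : ℝ → ℝ → ℝ → X →L[ℝ] X)
    (hS0 : ∀ ω s, S ω s s = 1)
    (hSderiv : ∀ (ω : ℝ) (s : ℝ) (x : X) (t : ℝ),
      HasDerivAt (fun r => S ω r s x) (A t (S ω t s x) + B (ω * t) (S ω t s x)) t) :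
    ∃ K' : ℝ, ∃ ω₀ > (0 : ℝ), ∀ ω > ω₀, ∀ s t : ℝ, s ≤ t →
      ‖S ω t s‖ ≤ K' * Real.exp (-(α / 2) * (t - s)) :=
  stmt10_general A B hBc M K α hK hα hAb hBb hBmean T hT0 hTderiv hTbound S hS0 hSderiv
end

section
/- In Kakutani's construction, with ε_m = M/K^{m−1} (M > 0, K > 1) and W_ε the weighted shift whose weight α_n equals ε_m when n = 2^{m−1}(2ℓ+1), let L_m be the weighted shift keeping only the weights ε_m at positions n = 2^{m−1}(2ℓ+1) and zero elsewhere. Then W_ε − L_m is nilpotent of index at most 2^m, i.e., (W_ε − L_m)^{2^m} = 0, so its spectral radius is 0. -/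
/-!
`W_ε - L_m` is the weighted shift whose weight at `n` vanishes exactly when
`n ≡ 2^(m-1) mod 2^m`, and every block of `2^m` consecutive positions contains such an `n`.
Its `2^m`-th power sends each basis vector to the product of `2^m` consecutive weights times
another basis vector, hence kills the basis and so is `0`. A nilpotent element has spectral
radius `0` by the bound `r(a) ≤ ‖a^n‖^(1/n)`.
-/

open scoped ENNReal

theorem Nat.Prime.factorization_eq_of_mod_pow_succ_eq {p x k : ℕ} (hp : p.Prime)
    (h : x % p ^ (k + 1) = p ^ k) : x.factorization p = k := by
  have hx : x = p ^ k * (p * (x / p ^ (k + 1)) + 1) := by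
    conv_lhs => rw [← Nat.div_add_mod x (p ^ (k + 1)), h]
    ring
  have hndvd : ¬ p ∣ p * (x / p ^ (k + 1)) + 1 := by
    rw [← Nat.dvd_add_iff_right (dvd_mul_right p _)]
    exact hp.not_dvd_one
  rw [hx, Nat.factorization_mul (pow_ne_zero _ hp.ne_zero) (by omega), Finsupp.add_apply,
    hp.factorization_pow, Nat.factorization_eq_zero_of_not_dvd hndvd]
  simp

theorem Nat.Prime.exists_lt_pow_succ_factorization_add_eq {p : ℕ} (hp : p.Prime) (k a : ℕ) :
    ∃ i < p ^ (k + 1), (a + i).factorization p = k := by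
  set N := p ^ (k + 1)
  have hN : 0 < N := pow_pos hp.pos _
  have hkN : p ^ k < N := Nat.pow_lt_pow_right hp.one_lt k.lt_succ_self
  refine ⟨(p ^ k + N - a % N) % N, Nat.mod_lt _ hN, hp.factorization_eq_of_mod_pow_succ_eq ?_⟩
  have hr : a % N < N := Nat.mod_lt _ hN
  change (a + (p ^ k + N - a % N) % N) % N = p ^ k
  rw [Nat.add_mod_mod, ← Nat.mod_add_mod, show a % N + (p ^ k + N - a % N) = p ^ k + N by omega,
    Nat.add_mod_right, Nat.mod_eq_of_lt hkN]

section SpectralRadius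

variable {𝕜 A : Type*} [NormedField 𝕜] [NormedRing A] [NormedAlgebra 𝕜 A] [CompleteSpace A]

theorem spectrum.spectralRadius_eq_zero_of_isNilpotent {a : A} (ha : IsNilpotent a) :
    spectralRadius 𝕜 a = 0 := by
  obtain ⟨n, hn⟩ := ha
  have hle := spectrum.spectralRadius_le_pow_nnnorm_pow_one_div 𝕜 a n
  have hpos : (0 : ℝ) < 1 / (n + 1) := by positivity
  rw [pow_succ, hn, zero_mul, nnnorm_zero, ENNReal.coe_zero, ENNReal.zero_rpow_of_pos hpos,
    zero_mul] at hle
  exact le_antisymm hle zero_le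

end SpectralRadius

section WeightedShift

variable {𝕜 : Type*} [NontriviallyNormedField 𝕜] (p : ℝ≥0∞) [Fact (1 ≤ p)]

def IsWeightedShift (T : lp (fun _ : ℕ => 𝕜) p →L[𝕜] lp (fun _ : ℕ => 𝕜) p) (w : ℕ → 𝕜) :
    Prop :=
  ∀ n, T (lp.single p n 1) = w n • lp.single p (n + 1) 1

variable {p} {S T : lp (fun _ : ℕ => 𝕜) p →L[𝕜] lp (fun _ : ℕ => 𝕜) p} {v w : ℕ → 𝕜}

theorem IsWeightedShift.sub (hS : IsWeightedShift p S v) (hT : IsWeightedShift p T w) :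
    IsWeightedShift p (S - T) (v - w) := fun n => by
  rw [sub_apply, hS n, hT n, Pi.sub_apply, sub_smul]

theorem IsWeightedShift.pow_apply_single (hT : IsWeightedShift p T w) (k n : ℕ) :
    (T ^ k) (lp.single p n 1) = (∏ i ∈ Finset.range k, w (n + i)) • lp.single p (n + k) 1 := by
  induction k generalizing n with
  | zero => simp
  | succ k ih =>
    rw [pow_succ, mul_apply_eq_comp, hT n, map_smul, ih (n + 1),
      Finset.prod_range_succ', smul_smul, mul_comm]
    simp only [add_assoc, add_comm 1, add_zero]

theorem ContinuousLinearMap.eq_zero_of_apply_lp_single_eq_zero {F : Type*} [NormedAddCommGroup F]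
    [NormedSpace 𝕜 F] (hp : p ≠ ⊤) {T : lp (fun _ : ℕ => 𝕜) p →L[𝕜] F}
    (hT : ∀ n, T (lp.single p n 1) = 0) : T = 0 := by
  ext f : 1
  have hsum := T.hasSum (lp.hasSum_single hp f)
  have hterm : ∀ n, T (lp.single p n (f n)) = 0 := fun n => by
    rw [← mul_one (f n), ← smul_eq_mul, lp.single_smul, map_smul, hT n, smul_zero]
  simp only [hterm] at hsum
  exact hsum.unique hasSum_zero

theorem IsWeightedShift.pow_eq_zero_of_forall_exists_weight_eq_zero (hp : p ≠ ⊤)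
    (hT : IsWeightedShift p T w) {k : ℕ} (hw : ∀ n, ∃ i < k, w (n + i) = 0) : T ^ k = 0 :=
  (T ^ k).eq_zero_of_apply_lp_single_eq_zero hp fun n => by
    obtain ⟨i, hi, hwi⟩ := hw n
    rw [hT.pow_apply_single, Finset.prod_eq_zero (Finset.mem_range.mpr hi) hwi, zero_smul]

end WeightedShift

theorem stmt12_general (M K : ℝ) (m : ℕ) (hm : 1 ≤ m)
    (W L : lp (fun _ : ℕ => ℝ) 2 →L[ℝ] lp (fun _ : ℕ => ℝ) 2)
    (hW : ∀ n : ℕ,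
      W (lp.single 2 n 1) = (M / K ^ ((n + 1).factorization 2)) • lp.single 2 (n + 1) 1)
    (hL : ∀ n : ℕ,
      L (lp.single 2 n 1) =
        (if (n + 1).factorization 2 = m - 1 then M / K ^ (m - 1) else 0) •
          lp.single 2 (n + 1) 1) :
    (W - L) ^ (2 ^ m) = 0 ∧ spectralRadius ℝ (W - L) = 0 := by
  obtain ⟨k, rfl⟩ : ∃ k, m = k + 1 := ⟨m - 1, by omega⟩
  have hshift := IsWeightedShift.sub (w := fun n => if (n + 1).factorization 2 = k + 1 - 1
    then M / K ^ (k + 1 - 1) else 0) hW hL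
  have hpow : (W - L) ^ (2 ^ (k + 1)) = 0 :=
    hshift.pow_eq_zero_of_forall_exists_weight_eq_zero ENNReal.ofNat_ne_top fun n => by
      obtain ⟨i, hi, hval⟩ := Nat.prime_two.exists_lt_pow_succ_factorization_add_eq k (n + 1)
      refine ⟨i, hi, ?_⟩
      rw [add_right_comm] at hval
      simp [hval]
  exact ⟨hpow, spectrum.spectralRadius_eq_zero_of_isNilpotent ⟨_, hpow⟩⟩

/-- Kakutani's construction. Write each positive integer
uniquely as `n = 2^(m-1) (2ℓ+1)`; the exponent `m − 1` is `n.factorization 2`.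
With `ε_m = M/K^(m−1)` (`M > 0`, `K > 1`), let `W_ε` be the weighted shift on
`ℓ²` whose weight at position `n` is `ε_m` when `n = 2^(m−1)(2ℓ+1)`, and let
`L_m` be the weighted shift keeping only the weights `ε_m` at the positions
`n = 2^(m−1)(2ℓ+1)` and zero elsewhere. Then `(W_ε − L_m)^(2^m) = 0`, so the
spectral radius of `W_ε − L_m` is `0`.
(The basis vector `lp.single 2 n 1` represents `e_{n+1}`, i.e. position `n+1`.) -/
theorem stmt12 (M K : ℝ) (hM : 0 < M) (hK : 1 < K) (m : ℕ) (hm : 1 ≤ m)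
    (W L : lp (fun _ : ℕ => ℝ) 2 →L[ℝ] lp (fun _ : ℕ => ℝ) 2)
    (hW : ∀ n : ℕ,
      W (lp.single 2 n 1) = (M / K ^ ((n + 1).factorization 2)) • lp.single 2 (n + 1) 1)
    (hL : ∀ n : ℕ,
      L (lp.single 2 n 1) =
        (if (n + 1).factorization 2 = m - 1 then M / K ^ (m - 1) else 0) •
          lp.single 2 (n + 1) 1) :
    (W - L) ^ (2 ^ m) = 0 ∧ spectralRadius ℝ (W - L) = 0 :=
  stmt12_general M K m hm W L hW hL
end

section
/- Let 0 < R − M/K < R < 1 < R + M/K and A = log(R·I + W_ε) where W_ε is the Kakutani shift (spectrum of R·I + W_ε is the closed disk of radius M/K centered at R). Then for all t ≥ 0, ‖e^{tA}‖ ≥ ρ(e^{tA}) = e^{t log(R + M/K)}, so the semigroup e^{tA} is unstable (its norm grows exponentially since R + M/K > 1). -/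
/-!
`exp A = R + W` has spectrum `closedBall R (M/K)`, hence spectral radius `r = R + M/K`, and
`log r ∈ σ(A)` puts `r ^ t = exp (t log r)` into `σ(exp (tA))`. For the reverse bound write
`n t = ⌊n t⌋ + s` with `s ∈ [0, 1]`: then `exp (tA) ^ n = exp A ^ ⌊n t⌋ * exp (sA)`, and since the
spectral radius is submultiplicative on commuting elements (Gelfand's formula),
`ρ(exp (tA)) ^ n ≤ e^{‖A‖} (r ^ t) ^ n` for every `n`, which forces `ρ(exp (tA)) ≤ r ^ t`.
-/

open NormedSpace
open scoped ENNReal NNReal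

instance lp.instNontrivial {α : Type*} [Nonempty α] {E : α → Type*}
    [∀ i, NormedAddCommGroup (E i)] [∀ i, Nontrivial (E i)] {p : ℝ≥0∞} :
    Nontrivial (lp E p) := by
  classical
  obtain ⟨i⟩ := ‹Nonempty α›
  obtain ⟨x, hx⟩ := exists_ne (0 : E i)
  refine ⟨lp.single p i x, 0, fun h => hx ?_⟩
  simpa using congrArg (fun f : lp E p => f i) h

theorem ENNReal.le_of_forall_pow_le_mul_pow {x y C : ℝ≥0∞} (hC : C ≠ ∞)
    (h : ∀ n : ℕ, x ^ n ≤ C * y ^ n) : x ≤ y := by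
  by_contra! hyx
  obtain ⟨b, hyb, hbx⟩ := ENNReal.lt_iff_exists_nnreal_btwn.1 hyx
  lift y to ℝ≥0 using hyb.ne_top
  lift C to ℝ≥0 using hC
  have hyb : y < b := ENNReal.coe_lt_coe.1 hyb
  have hb : 0 < b := pos_of_gt hyb
  obtain ⟨n, hn⟩ := (((NNReal.tendsto_pow_atTop_nhds_zero_of_lt_one
    ((div_lt_one hb).2 hyb)).const_mul C).eventually (gt_mem_nhds (by simp : C * 0 < 1))).exists
  have hbn : b ^ n ≤ C * y ^ n := by exact_mod_cast (pow_le_pow_left' hbx.le n).trans (h n)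
  rw [div_pow, ← mul_div_assoc, div_lt_one (pow_pos hb n)] at hn
  exact hn.not_ge hbn

theorem NormedSpace.norm_exp_le_exp_norm {𝔸 : Type*} [NormedRing 𝔸] [NormedAlgebra ℂ 𝔸]
    [NormOneClass 𝔸] (x : 𝔸) :
    ‖exp x‖ ≤ Real.exp ‖x‖ := by
  rw [exp_eq_tsum ℂ, Real.exp_eq_exp_ℝ, exp_eq_tsum ℝ]
  refine (norm_tsum_le_tsum_norm (norm_expSeries_summable' x)).trans <|
    (norm_expSeries_summable' x).tsum_le_tsum (fun n => ?_) (expSeries_summable' (𝕂 := ℝ) ‖x‖)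
  rw [norm_smul, norm_inv, Complex.norm_natCast, smul_eq_mul]
  gcongr
  exact norm_pow_le x n

section BanachAlgebra

variable {𝔸 : Type*} [NormedRing 𝔸] [NormedAlgebra ℂ 𝔸] [CompleteSpace 𝔸]

theorem spectralRadius_mul_le_of_commute {a b : 𝔸} (hab : Commute a b) :
    spectralRadius ℂ (a * b) ≤ spectralRadius ℂ a * spectralRadius ℂ b := by
  have hfin (c : 𝔸) : spectralRadius ℂ c ≠ ∞ := by
    refine ((spectrum.spectralRadius_le_pow_nnnorm_pow_one_div ℂ c 0).trans_lt ?_).ne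
    simp [ENNReal.mul_lt_top]
  refine le_of_tendsto_of_tendsto'
    (spectrum.pow_nnnorm_pow_one_div_tendsto_nhds_spectralRadius (a * b))
    (ENNReal.Tendsto.mul (spectrum.pow_nnnorm_pow_one_div_tendsto_nhds_spectralRadius a)
      (Or.inr (hfin b)) (spectrum.pow_nnnorm_pow_one_div_tendsto_nhds_spectralRadius b)
      (Or.inr (hfin a))) fun n => ?_
  rw [hab.mul_pow, ← ENNReal.mul_rpow_of_nonneg _ _ (by positivity)]
  gcongr
  exact_mod_cast nnnorm_mul_le _ _

theorem spectralRadius_pow_le_pow (a : 𝔸) (n : ℕ) :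
    spectralRadius ℂ (a ^ n) ≤ spectralRadius ℂ a ^ n := by
  induction n with
  | zero => nontriviality 𝔸; simp
  | succ n ih =>
    rw [pow_succ, pow_succ]
    exact (spectralRadius_mul_le_of_commute ((Commute.refl a).pow_left n)).trans (by gcongr)

theorem spectralRadius_exp_smul_le [NormOneClass 𝔸] {A : 𝔸} {r : ℝ} (hr : 1 ≤ r)
    (hA : spectralRadius ℂ (exp A) ≤ ENNReal.ofReal r) {t : ℝ} (ht : 0 ≤ t) :
    spectralRadius ℂ (exp ((t : ℂ) • A)) ≤ ENNReal.ofReal (r ^ t) := by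
  nontriviality 𝔸
  refine ENNReal.le_of_forall_pow_le_mul_pow (C := ENNReal.ofReal (Real.exp ‖A‖))
    ENNReal.ofReal_ne_top fun n => ?_
  set m := ⌊n * t⌋₊
  set s := n * t - m
  have hs0 : 0 ≤ s := sub_nonneg.2 (Nat.floor_le (by positivity))
  have hs1 : s ≤ 1 := by have := Nat.lt_floor_add_one (n * t); linarith
  -- `exp_nsmul` and `exp_add_of_commute` are stated for `ℚ`-algebras
  let +nondep : NormedAlgebra ℚ 𝔸 := .restrictScalars ℚ ℂ 𝔸
  have hsplit : exp ((t : ℂ) • A) ^ n = exp A ^ m * exp ((s : ℂ) • A) := by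
    have hexponent : n • ((t : ℂ) • A) = m • A + (s : ℂ) • A := by
      rw [← Nat.cast_smul_eq_nsmul ℂ, ← Nat.cast_smul_eq_nsmul ℂ, smul_smul, ← add_smul]
      push_cast [s]
      ring_nf
    rw [← exp_nsmul, hexponent, exp_add_of_commute (((Commute.refl A).smul_right _).smul_left _),
      exp_nsmul]
  have hexp_s : spectralRadius ℂ (exp ((s : ℂ) • A)) ≤ ENNReal.ofReal (Real.exp ‖A‖) := by
    refine (spectrum.spectralRadius_le_nnnorm _).trans ?_
    rw [← enorm_eq_nnnorm, ← ofReal_norm]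
    refine ENNReal.ofReal_le_ofReal ((norm_exp_le_exp_norm _).trans (Real.exp_le_exp.2 ?_))
    rw [norm_smul, Complex.norm_real, Real.norm_of_nonneg hs0]
    exact mul_le_of_le_one_left (norm_nonneg A) hs1
  have hpow : r ^ m ≤ (r ^ t) ^ n := by
    rw [← Real.rpow_natCast, ← Real.rpow_natCast, ← Real.rpow_mul (by linarith), mul_comm t]
    exact Real.rpow_le_rpow_of_exponent_le hr (Nat.floor_le (by positivity))
  calc spectralRadius ℂ (exp ((t : ℂ) • A)) ^ n
      ≤ spectralRadius ℂ (exp ((t : ℂ) • A) ^ n) := spectrum.spectralRadius_pow_le' _ n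
    _ = spectralRadius ℂ (exp A ^ m * exp ((s : ℂ) • A)) := by rw [hsplit]
    _ ≤ spectralRadius ℂ (exp A) ^ m * spectralRadius ℂ (exp ((s : ℂ) • A)) :=
      (spectralRadius_mul_le_of_commute (((Commute.refl A).smul_right _).exp.pow_left m)).trans
        (by gcongr; exact spectralRadius_pow_le_pow _ _)
    _ ≤ ENNReal.ofReal r ^ m * ENNReal.ofReal (Real.exp ‖A‖) := by gcongr
    _ ≤ ENNReal.ofReal (Real.exp ‖A‖) * ENNReal.ofReal (r ^ t) ^ n := by
      rw [mul_comm, ← ENNReal.ofReal_pow (by linarith), ← ENNReal.ofReal_pow (by positivity)]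
      gcongr

theorem nnnorm_exp_mul_le_spectralRadius_exp_smul {A : 𝔸} {z : ℂ} (hz : z ∈ spectrum ℂ A)
    (c : ℂ) : (‖Complex.exp (c * z)‖₊ : ℝ≥0∞) ≤ spectralRadius ℂ (exp (c • A)) := by
  have : Nontrivial 𝔸 := not_subsingleton_iff_nontrivial.1 fun _ => by
    simp [spectrum.of_subsingleton] at hz
  have hcz : c * z ∈ spectrum ℂ (c • A) := by
    rw [spectrum.smul_eq_smul c A ⟨z, hz⟩]
    exact Set.smul_mem_smul_set hz
  rw [Complex.exp_eq_exp_ℂ]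
  exact le_iSup₂ (α := ℝ≥0∞) _ (spectrum.exp_mem_exp _ hcz)

end BanachAlgebra

theorem stmt14_general (M K R : ℝ)
    (h1 : 0 < R - M / K) (h2 : R < 1) (h3 : 1 < R + M / K)
    (W : lp (fun _ : ℕ => ℂ) 2 →L[ℂ] lp (fun _ : ℕ => ℂ) 2)
    (hWspec : spectrum ℂ ((R : ℂ) • (1 : lp (fun _ : ℕ => ℂ) 2 →L[ℂ] lp (fun _ : ℕ => ℂ) 2) + W)
      = Metric.closedBall (R : ℂ) (M / K))
    (A : lp (fun _ : ℕ => ℂ) 2 →L[ℂ] lp (fun _ : ℕ => ℂ) 2)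
    (hexp : NormedSpace.exp A =
      (R : ℂ) • (1 : lp (fun _ : ℕ => ℂ) 2 →L[ℂ] lp (fun _ : ℕ => ℂ) 2) + W)
    (hAspec : spectrum ℂ A = Complex.log '' Metric.closedBall (R : ℂ) (M / K)) :
    ∀ t : ℝ, 0 ≤ t →
      spectralRadius ℂ (NormedSpace.exp (t • A)) =
        ENNReal.ofReal (Real.exp (t * Real.log (R + M / K))) ∧
      Real.exp (t * Real.log (R + M / K)) ≤ ‖NormedSpace.exp (t • A)‖ := by
  intro t ht
  set r := R + M / K
  have hR : 0 ≤ R := by linarith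
  have hr_mem : (r : ℂ) ∈ Metric.closedBall (R : ℂ) (M / K) := by
    rw [Metric.mem_closedBall, Complex.dist_eq, ← Complex.ofReal_sub, Complex.norm_real,
      Real.norm_eq_abs, abs_le]
    constructor <;> linarith
  have hρ_exp : spectralRadius ℂ (exp A) ≤ ENNReal.ofReal r := by
    refine iSup₂_le fun z hz => ?_
    rw [hexp, hWspec] at hz
    rw [← enorm_eq_nnnorm, ← ofReal_norm]
    refine ENNReal.ofReal_le_ofReal ((norm_le_of_mem_closedBall hz).trans ?_)
    rw [Complex.norm_real, Real.norm_of_nonneg hR]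
  have hexp_log : (‖Complex.exp (t * Complex.log r)‖₊ : ℝ≥0∞) =
      ENNReal.ofReal (Real.exp (t * Real.log r)) := by
    rw [← Complex.ofReal_log (by linarith), ← Complex.ofReal_mul, ← Complex.ofReal_exp,
      ← enorm_eq_nnnorm, ← ofReal_norm, Complex.norm_real, Real.norm_of_nonneg (Real.exp_nonneg _)]
  have hsmul : t • A = (t : ℂ) • A := (Complex.coe_smul t A).symm
  have hρ : spectralRadius ℂ (exp (t • A)) = ENNReal.ofReal (Real.exp (t * Real.log r)) := by
    rw [hsmul]
    refine le_antisymm ?_ (hexp_log ▸ nnnorm_exp_mul_le_spectralRadius_exp_smul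
      (hAspec ▸ ⟨r, hr_mem, rfl⟩) (t : ℂ))
    rw [mul_comm, ← Real.rpow_def_of_pos (by linarith)]
    exact spectralRadius_exp_smul_le h3.le hρ_exp ht
  refine ⟨hρ, ?_⟩
  have := hρ ▸ spectrum.spectralRadius_le_nnnorm (𝕜 := ℂ) (exp (t • A))
  rwa [← enorm_eq_nnnorm, ← ofReal_norm, ENNReal.ofReal_le_ofReal_iff (norm_nonneg _)] at this

/-- Let `0 < R − M/K < R < 1 < R + M/K` and
`A = log(R·I + W_ε)`, where `W_ε` is the Kakutani shift, so that
`σ(R·I + W_ε)` is the closed disk of radius `M/K` centered at `R` and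
`σ(A) = log(σ(R·I + W_ε))`. Then for all `t ≥ 0`,
`‖e^{tA}‖ ≥ ρ(e^{tA}) = e^{t·log(R + M/K)}`: the semigroup `e^{tA}` is
unstable (its norm grows exponentially since `R + M/K > 1`). -/
theorem stmt14 (M K R : ℝ) (hM : 0 < M) (hK : 1 < K)
    (h1 : 0 < R - M / K) (h2 : R < 1) (h3 : 1 < R + M / K)
    (W : lp (fun _ : ℕ => ℂ) 2 →L[ℂ] lp (fun _ : ℕ => ℂ) 2)
    (hW : ∀ n : ℕ,
      W (lp.single 2 n 1) =
        ((M : ℂ) / (K : ℂ) ^ ((n + 1).factorization 2)) • lp.single 2 (n + 1) 1)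
    (hWspec : spectrum ℂ ((R : ℂ) • (1 : lp (fun _ : ℕ => ℂ) 2 →L[ℂ] lp (fun _ : ℕ => ℂ) 2) + W)
      = Metric.closedBall (R : ℂ) (M / K))
    (A : lp (fun _ : ℕ => ℂ) 2 →L[ℂ] lp (fun _ : ℕ => ℂ) 2)
    (hexp : NormedSpace.exp A =
      (R : ℂ) • (1 : lp (fun _ : ℕ => ℂ) 2 →L[ℂ] lp (fun _ : ℕ => ℂ) 2) + W)
    (hAspec : spectrum ℂ A = Complex.log '' Metric.closedBall (R : ℂ) (M / K)) :
    ∀ t : ℝ, 0 ≤ t →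
      spectralRadius ℂ (NormedSpace.exp (t • A)) =
        ENNReal.ofReal (Real.exp (t * Real.log (R + M / K))) ∧
      Real.exp (t * Real.log (R + M / K)) ≤ ‖NormedSpace.exp (t • A)‖ :=
  stmt14_general M K R h1 h2 h3 W hWspec A hexp hAspec
end

section
/- There exists a bounded operator A on a separable Hilbert space H with ‖e^{tA}‖ ≥ e^{ωt} for some ω > 0 (unstable), and a sequence of bounded operators B_m with ‖B_m‖ → 0 such that each semigroup e^{t(A+B_m)} is exponentially stable: for each m there exist D_m and ω' > 0 with ‖e^{t(A+B_m)}‖ ≤ D_m e^{−ω' t} for all t ≥ 0. Thus instability of autonomous linear equations in infinite dimensions is not robust under arbitrarily small bounded perturbations. -/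
/-
Let `V` be the weighted shift on `ℓ²(ℕ, ℂ)` with weights `σ_j = 8 · 2^{-ν₂(j+1)}` (Kakutani's
weights), and `A = V - 1`. The vector `x_j = 2^{ν₂(j!)} / 4^j` is square summable since
`ν₂(j!) ≤ j`, and `σ_j x_{j+1} = 2 x_j`, i.e. `V* x = 2 x`. Hence `1 ∈ σ(A)`, so `e^t ∈ σ(e^{tA})`
by spectral mapping and `‖e^{tA}‖ ≥ e^t`.
The weights at the indices with `2^m ∣ j + 1` are at most `8 · 2^{-m}`. Deleting them (this is
`B_m`) leaves a weighted shift `N_m` with `N_m ^ 2^m = 0`, so `e^{t(A + B_m)} = e^{-t} e^{t N_m}`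
where `e^{t N_m}` grows only polynomially in `t`.
-/

open Finset
open scoped Nat lp ENNReal

theorem Real.pow_div_factorial_le_two_pow_mul_exp {t : ℝ} (ht : 0 ≤ t) (n : ℕ) :
    t ^ n / n ! ≤ 2 ^ n * Real.exp (t / 2) := by
  calc t ^ n / n ! = 2 ^ n * ((t / 2) ^ n / n !) := by rw [div_pow]; field_simp
    _ ≤ 2 ^ n * Real.exp (t / 2) := by
      gcongr; exact Real.pow_div_factorial_le_exp _ (by positivity) n

section NilpotentExp

variable {𝔸 : Type*} [NormedRing 𝔸] [NormedAlgebra ℝ 𝔸]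

theorem exp_smul_eq_sum_of_pow_eq_zero {N : 𝔸} {k : ℕ} (hN : N ^ k = 0) (t : ℝ) :
    NormedSpace.exp (t • N) = ∑ n ∈ range k, (t ^ n / n !) • N ^ n := by
  have hvanish : ∀ n ∉ range k, ((n ! : ℝ)⁻¹) • (t • N) ^ n = 0 := fun n hn => by
    rw [smul_pow, pow_eq_zero_of_le (not_lt.1 (mem_range.not.1 hn)) hN, smul_zero, smul_zero]
  rw [congrFun (NormedSpace.exp_eq_tsum ℝ) (t • N), tsum_eq_sum hvanish]
  refine sum_congr rfl fun n _ => ?_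
  rw [smul_pow, smul_smul, div_eq_inv_mul]

theorem norm_exp_smul_le_of_pow_eq_zero {N : 𝔸} {k : ℕ} (hN : N ^ k = 0) {t : ℝ}
    (ht : 0 ≤ t) :
    ‖NormedSpace.exp (t • N)‖ ≤ (∑ n ∈ range k, 2 ^ n * ‖N ^ n‖) * Real.exp (t / 2) := by
  rw [exp_smul_eq_sum_of_pow_eq_zero hN, sum_mul]
  refine (norm_sum_le _ _).trans (sum_le_sum fun n _ => ?_)
  rw [norm_smul, Real.norm_of_nonneg (by positivity), mul_right_comm]
  gcongr
  exact Real.pow_div_factorial_le_two_pow_mul_exp ht n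

theorem exp_smul_sub_one [CompleteSpace 𝔸] (a : 𝔸) (t : ℝ) :
    NormedSpace.exp (t • (a - 1)) = Real.exp (-t) • NormedSpace.exp (t • a) := by
  let : NormedAlgebra ℚ 𝔸 := .restrictScalars ℚ ℝ 𝔸
  have hsplit : t • (a - 1) = algebraMap ℝ 𝔸 (-t) + t • a := by
    rw [Algebra.algebraMap_eq_smul_one, smul_sub, neg_smul, sub_eq_neg_add]
  rw [hsplit, NormedSpace.exp_add_of_commute (Algebra.commutes _ _),
    ← NormedSpace.algebraMap_exp_comm, ← Real.exp_eq_exp_ℝ, ← Algebra.smul_def]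

theorem IsNilpotent.exists_norm_exp_smul_sub_one_le [CompleteSpace 𝔸] {N : 𝔸}
    (hN : IsNilpotent N) :
    ∃ D > (0 : ℝ), ∃ ω > (0 : ℝ), ∀ t : ℝ, 0 ≤ t →
      ‖NormedSpace.exp (t • (N - 1))‖ ≤ D * Real.exp (-ω * t) := by
  obtain ⟨k, hk⟩ := hN
  set C := ∑ n ∈ range k, 2 ^ n * ‖N ^ n‖
  have hC : 0 ≤ C := sum_nonneg fun n _ => by positivity
  refine ⟨C + 1, by positivity, 1 / 2, by norm_num, fun t ht => ?_⟩
  rw [exp_smul_sub_one, norm_smul, Real.norm_of_nonneg (Real.exp_nonneg _)]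
  calc Real.exp (-t) * ‖NormedSpace.exp (t • N)‖
        ≤ Real.exp (-t) * (C * Real.exp (t / 2)) := by
          gcongr; exact norm_exp_smul_le_of_pow_eq_zero hk ht
    _ = C * Real.exp (-(1 / 2) * t) := by
        rw [mul_left_comm, ← Real.exp_add]; ring_nf
    _ ≤ (C + 1) * Real.exp (-(1 / 2) * t) := by gcongr; linarith

end NilpotentExp

theorem real_exp_re_le_norm_exp_smul_of_mem_spectrum {𝔸 : Type*} [NormedRing 𝔸]
    [CompleteSpace 𝔸] [NormedAlgebra ℂ 𝔸] [NormOneClass 𝔸] {a : 𝔸} {z : ℂ}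
    (hz : z ∈ spectrum ℂ a) (w : ℂ) :
    Real.exp (w * z).re ≤ ‖NormedSpace.exp (w • a)‖ := by
  rcases eq_or_ne w 0 with rfl | hw
  · simp
  have hwz : w * z ∈ spectrum ℂ (w • a) := by
    simpa using spectrum.smul_mem_smul_iff (r := Units.mk0 w hw).2 hz
  have := spectrum.norm_le_norm_of_mem (spectrum.exp_mem_exp _ hwz)
  rwa [← Complex.exp_eq_exp_ℂ, Complex.norm_exp] at this

theorem ContinuousLinearMap.mem_spectrum_of_inner_apply_eq_mul {𝕜 E : Type*} [RCLike 𝕜]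
    [NormedAddCommGroup E] [InnerProductSpace 𝕜 E] {T : E →L[𝕜] E} {x : E} (hx : x ≠ 0)
    {c : 𝕜} (h : ∀ z, inner 𝕜 x (T z) = c * inner 𝕜 x z) : c ∈ spectrum 𝕜 T := by
  rintro ⟨u, hu⟩
  have hsurj : (algebraMap 𝕜 (E →L[𝕜] E) c - T) (u.inv x) = x := by
    rw [← hu]; exact congr($(u.val_inv) x)
  refine hx ((inner_self_eq_zero (𝕜 := 𝕜)).1 ?_)
  calc inner 𝕜 x x = inner 𝕜 x ((algebraMap 𝕜 (E →L[𝕜] E) c - T) (u.inv x)) := by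
        rw [hsurj]
    _ = 0 := by simp [Algebra.algebraMap_eq_smul_one, inner_sub_right, inner_smul_right, h]

theorem Nat.add_one_mod_of_not_dvd {j k : ℕ} (h : ¬ k ∣ j + 1) : (j + 1) % k = j % k + 1 := by
  rcases Nat.eq_zero_or_pos k with rfl | hk
  · simp
  have hlt : j % k + 1 < k := by
    refine lt_of_le_of_ne (Nat.mod_lt j hk) fun heq => h ?_
    rw [Nat.dvd_iff_mod_eq_zero, ← Nat.mod_add_mod, heq, Nat.mod_self]
  rw [← Nat.mod_add_mod, Nat.mod_eq_of_lt hlt]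

namespace lp

theorem summable_norm_sq {α : Type*} {E : α → Type*} [∀ i, NormedAddCommGroup (E i)]
    (y : lp E 2) : Summable fun i => ‖y i‖ ^ 2 := by
  simpa using (lp.memℓp y).summable (by norm_num)

def weightedShiftFun (σ : ℕ → ℂ) (x : ℕ → ℂ) : ℕ → ℂ
  | 0 => 0
  | n + 1 => σ n * x n

variable (σ : ℓ^∞(ℕ, ℂ)) (x : ℓ²(ℕ, ℂ))

theorem norm_sq_weightedShiftFun_succ_le (n : ℕ) :
    ‖weightedShiftFun σ x (n + 1)‖ ^ 2 ≤ ‖σ‖ ^ 2 * ‖x n‖ ^ 2 := by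
  rw [weightedShiftFun, norm_mul, mul_pow]
  gcongr
  exact lp.norm_apply_le_norm ENNReal.top_ne_zero σ n

theorem summable_norm_sq_weightedShiftFun : Summable fun n => ‖weightedShiftFun σ x n‖ ^ 2 :=
  (summable_nat_add_iff 1).1 <| ((summable_norm_sq x).mul_left _).of_nonneg_of_le
    (fun _ => by positivity) (norm_sq_weightedShiftFun_succ_le σ x)

theorem memℓp_weightedShiftFun : Memℓp (weightedShiftFun σ x) 2 :=
  memℓp_gen (by simpa using summable_norm_sq_weightedShiftFun σ x)

theorem norm_weightedShiftFun_le :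
    ‖(⟨weightedShiftFun σ x, memℓp_weightedShiftFun σ x⟩ : ℓ²(ℕ, ℂ))‖ ≤ ‖σ‖ * ‖x‖ := by
  refine lp.norm_le_of_tsum_le (by norm_num) (by positivity) ?_
  have hx : ‖x‖ ^ 2 = ∑' n, ‖x n‖ ^ 2 := by
    simpa using lp.norm_rpow_eq_tsum (p := 2) (by norm_num) x
  simp only [ENNReal.toReal_ofNat, Real.rpow_two]
  calc ∑' n, ‖weightedShiftFun σ x n‖ ^ 2
        = ∑' n, ‖weightedShiftFun σ x (n + 1)‖ ^ 2 := by
        rw [(summable_norm_sq_weightedShiftFun σ x).tsum_eq_zero_add]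
        simp [weightedShiftFun]
    _ ≤ ∑' n, ‖σ‖ ^ 2 * ‖x n‖ ^ 2 :=
      ((summable_nat_add_iff 1).2 (summable_norm_sq_weightedShiftFun σ x)).tsum_le_tsum
        (norm_sq_weightedShiftFun_succ_le σ x) ((summable_norm_sq x).mul_left _)
    _ = (‖σ‖ * ‖x‖) ^ 2 := by rw [tsum_mul_left, ← hx, mul_pow]

noncomputable def weightedShift : ℓ²(ℕ, ℂ) →L[ℂ] ℓ²(ℕ, ℂ) :=
  LinearMap.mkContinuous
    { toFun y := ⟨weightedShiftFun σ y, memℓp_weightedShiftFun σ y⟩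
      map_add' y z := by ext (_ | n); exacts [(add_zero 0).symm, mul_add _ _ _]
      map_smul' c y := by ext (_ | n) <;> simp [weightedShiftFun, mul_left_comm] }
    ‖σ‖ (norm_weightedShiftFun_le σ)

@[simp] theorem weightedShift_apply_zero : weightedShift σ x 0 = 0 := rfl

@[simp] theorem weightedShift_apply_succ (n : ℕ) : weightedShift σ x (n + 1) = σ n * x n := rfl

theorem norm_weightedShift_le : ‖weightedShift σ‖ ≤ ‖σ‖ :=
  LinearMap.mkContinuous_norm_le _ (norm_nonneg σ) _

theorem weightedShift_sub (τ : ℓ^∞(ℕ, ℂ)) :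
    weightedShift (σ - τ) = weightedShift σ - weightedShift τ := by
  ext y (_ | n) <;> simp [sub_mul]

theorem weightedShift_pow_apply_eq_zero {k : ℕ} (hσ : ∀ j, k ∣ j + 1 → σ j = 0) (N : ℕ) :
    ∀ n, n % k < N → (weightedShift σ ^ N) x n = 0 := by
  induction N with
  | zero => intro n h; omega
  | succ N ih =>
    rintro (_ | j) hj
    · rw [pow_succ', mul_apply_eq_comp, weightedShift_apply_zero]
    rw [pow_succ', mul_apply_eq_comp, weightedShift_apply_succ]
    by_cases hdvd : k ∣ j + 1
    · rw [hσ j hdvd, zero_mul]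
    · rw [ih j ?_, mul_zero]
      rw [Nat.add_one_mod_of_not_dvd hdvd] at hj
      omega

theorem weightedShift_pow_eq_zero {k : ℕ} (hk : 0 < k) (hσ : ∀ j, k ∣ j + 1 → σ j = 0) :
    weightedShift σ ^ k = 0 := by
  ext y n
  exact weightedShift_pow_apply_eq_zero σ y hσ k n (Nat.mod_lt n hk)

end lp

namespace Kakutani

noncomputable def weight (j : ℕ) : ℝ := (2 ^ padicValNat 2 (j + 1))⁻¹

theorem weight_pos (j : ℕ) : 0 < weight j := by
  unfold weight; positivity

theorem weight_le_one (j : ℕ) : weight j ≤ 1 :=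
  inv_le_one_of_one_le₀ (one_le_pow₀ one_le_two)

theorem weight_le_of_dvd {m j : ℕ} (h : 2 ^ m ∣ j + 1) : weight j ≤ (1 / 2) ^ m := by
  rw [weight, one_div, inv_pow]
  exact inv_anti₀ (by positivity)
    (pow_le_pow_right₀ one_le_two ((padicValNat_dvd_iff_le j.succ_ne_zero).1 h))

noncomputable def eigenCoeff (j : ℕ) : ℝ := 2 ^ padicValNat 2 j ! / 4 ^ j

theorem eigenCoeff_nonneg (j : ℕ) : 0 ≤ eigenCoeff j := by
  unfold eigenCoeff; positivity

theorem eigenCoeff_succ_mul_weight (j : ℕ) :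
    eigenCoeff (j + 1) * weight j = eigenCoeff j / 4 := by
  rw [eigenCoeff, eigenCoeff, weight, Nat.factorial_succ,
    padicValNat.mul j.succ_ne_zero j.factorial_ne_zero, pow_add, pow_succ]
  field_simp

theorem eigenCoeff_le (j : ℕ) : eigenCoeff j ≤ (1 / 2) ^ j := by
  have hlegendre : padicValNat 2 j ! ≤ j := by
    have := sub_one_mul_padicValNat_factorial (p := 2) j
    omega
  rw [eigenCoeff, div_le_iff₀ (by positivity)]
  calc (2 : ℝ) ^ padicValNat 2 j ! ≤ 2 ^ j := pow_le_pow_right₀ one_le_two hlegendre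
    _ = (1 / 2) ^ j * 4 ^ j := by rw [← mul_pow]; norm_num

theorem memℓp_eigenCoeff : Memℓp (fun j => (eigenCoeff j : ℂ)) 2 := by
  have hgeom : Summable fun j : ℕ => (1 / 4 : ℝ) ^ j :=
    summable_geometric_of_lt_one (by norm_num) (by norm_num)
  refine memℓp_gen <| hgeom.of_nonneg_of_le (fun _ => by positivity) fun j => ?_
  simp only [ENNReal.toReal_ofNat, Real.rpow_two, Complex.norm_real,
    Real.norm_of_nonneg (eigenCoeff_nonneg j)]
  calc eigenCoeff j ^ 2 ≤ ((1 / 2) ^ j) ^ 2 :=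
        pow_le_pow_left₀ (eigenCoeff_nonneg j) (eigenCoeff_le j) 2
    _ = (1 / 4) ^ j := by rw [← pow_mul, mul_comm, pow_mul]; norm_num

noncomputable def eigenvector : ℓ²(ℕ, ℂ) :=
  ⟨fun j => (eigenCoeff j : ℂ), memℓp_eigenCoeff⟩

theorem eigenvector_ne_zero : eigenvector ≠ 0 := fun h => by
  simpa [eigenvector, eigenCoeff] using congr($h 0)

theorem norm_eight_mul_weight_le (j : ℕ) : ‖((8 * weight j : ℝ) : ℂ)‖ ≤ 8 := by
  rw [Complex.norm_real, Real.norm_of_nonneg (by linarith [weight_pos j])]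
  linarith [weight_le_one j]

noncomputable def weights : ℓ^∞(ℕ, ℂ) :=
  ⟨fun j => (8 * weight j : ℝ),
    memℓp_infty ⟨8, Set.forall_mem_range.2 norm_eight_mul_weight_le⟩⟩

noncomputable def weightsOnMultiples (m : ℕ) : ℓ^∞(ℕ, ℂ) :=
  ⟨fun j => if 2 ^ m ∣ j + 1 then weights j else 0,
    (lp.memℓp weights).mono' fun j => by dsimp only; split_ifs <;> simp⟩

theorem norm_weightsOnMultiples_le (m : ℕ) : ‖weightsOnMultiples m‖ ≤ 8 * (1 / 2) ^ m := by
  refine lp.norm_le_of_forall_le (by positivity) fun j => ?_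
  show ‖if 2 ^ m ∣ j + 1 then weights j else 0‖ ≤ _
  split_ifs with h
  · show ‖((8 * weight j : ℝ) : ℂ)‖ ≤ _
    rw [Complex.norm_real, Real.norm_of_nonneg (by linarith [weight_pos j])]
    linarith [weight_le_of_dvd h]
  · rw [norm_zero]; positivity

theorem inner_eigenvector_weightedShift (z : ℓ²(ℕ, ℂ)) :
    inner ℂ eigenvector (lp.weightedShift weights z) = 2 * inner ℂ eigenvector z := by
  have hterm (k : ℕ) : inner ℂ (eigenvector (k + 1)) (lp.weightedShift weights z (k + 1))
      = 2 * inner ℂ (eigenvector k) (z k) := by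
    show inner ℂ ((eigenCoeff (k + 1) : ℝ) : ℂ) (((8 * weight k : ℝ) : ℂ) * z k)
      = 2 * inner ℂ ((eigenCoeff k : ℝ) : ℂ) (z k)
    have hcoeff : (eigenCoeff (k + 1) : ℂ) * (8 * weight k) = 2 * eigenCoeff k := by
      exact_mod_cast (by linarith [eigenCoeff_succ_mul_weight k] :
        eigenCoeff (k + 1) * (8 * weight k) = 2 * eigenCoeff k)
    simp only [RCLike.inner_apply, Complex.conj_ofReal]
    push_cast
    linear_combination z k * hcoeff
  rw [lp.inner_eq_tsum, lp.inner_eq_tsum,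
    (lp.summable_inner (𝕜 := ℂ) eigenvector (lp.weightedShift weights z)).tsum_eq_zero_add,
    lp.weightedShift_apply_zero, inner_zero_right, zero_add, tsum_congr hterm, tsum_mul_left]

noncomputable def A : ℓ²(ℕ, ℂ) →L[ℂ] ℓ²(ℕ, ℂ) := lp.weightedShift weights - 1

noncomputable def B (m : ℕ) : ℓ²(ℕ, ℂ) →L[ℂ] ℓ²(ℕ, ℂ) :=
  -lp.weightedShift (weightsOnMultiples m)

theorem one_mem_spectrum_A : (1 : ℂ) ∈ spectrum ℂ A :=
  ContinuousLinearMap.mem_spectrum_of_inner_apply_eq_mul eigenvector_ne_zero fun z => by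
    rw [A, sub_apply, one_apply_eq_self, inner_sub_right, inner_eigenvector_weightedShift]
    ring

theorem tendsto_norm_B : Filter.Tendsto (fun m => ‖B m‖) Filter.atTop (nhds 0) := by
  refine squeeze_zero (fun _ => norm_nonneg _) (fun m => ?_)
    (by simpa only [mul_zero] using (tendsto_pow_atTop_nhds_zero_of_lt_one
      (by norm_num) (by norm_num : (1 / 2 : ℝ) < 1)).const_mul 8)
  rw [B, norm_neg]
  exact (lp.norm_weightedShift_le _).trans (norm_weightsOnMultiples_le m)

theorem A_add_B (m : ℕ) : A + B m = lp.weightedShift (weights - weightsOnMultiples m) - 1 := by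
  rw [A, B, lp.weightedShift_sub]; abel

theorem isNilpotent_weightedShift_sub_weightsOnMultiples (m : ℕ) :
    IsNilpotent (lp.weightedShift (weights - weightsOnMultiples m)) :=
  ⟨2 ^ m, lp.weightedShift_pow_eq_zero _ (by positivity) fun j h => by
    show weights j - (if 2 ^ m ∣ j + 1 then weights j else 0) = 0
    rw [if_pos h, sub_self]⟩

end Kakutani

/-- There exists a bounded operator `A` on an
infinite-dimensional separable Hilbert space (here `ℓ²(ℕ, ℂ)`) with
`‖e^{tA}‖ ≥ e^{ωt}` for some `ω > 0` (so the semigroup `e^{tA}` is unstable),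
and a sequence of bounded operators `B_m` with `‖B_m‖ → 0` such that each
semigroup `e^{t(A + B_m)}` is exponentially stable. Thus instability of
autonomous linear equations in infinite dimensions is not robust under
arbitrarily small bounded perturbations. -/
theorem stmt16 :
    ∃ (A : lp (fun _ : ℕ => ℂ) 2 →L[ℂ] lp (fun _ : ℕ => ℂ) 2) (ω : ℝ), 0 < ω ∧
      (∀ t : ℝ, 0 ≤ t → Real.exp (ω * t) ≤ ‖NormedSpace.exp (t • A)‖) ∧
      ∃ B : ℕ → (lp (fun _ : ℕ => ℂ) 2 →L[ℂ] lp (fun _ : ℕ => ℂ) 2),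
        Filter.Tendsto (fun m => ‖B m‖) Filter.atTop (nhds 0) ∧
        ∀ m : ℕ, ∃ D > (0 : ℝ), ∃ ω' > (0 : ℝ), ∀ t : ℝ, 0 ≤ t →
          ‖NormedSpace.exp (t • (A + B m))‖ ≤ D * Real.exp (-ω' * t) := by
  refine ⟨Kakutani.A, 1, one_pos, fun t _ => ?_, Kakutani.B, Kakutani.tendsto_norm_B,
    fun m => ?_⟩
  · have : Nontrivial ℓ²(ℕ, ℂ) := nontrivial_of_ne _ _ Kakutani.eigenvector_ne_zero
    have h := real_exp_re_le_norm_exp_smul_of_mem_spectrum Kakutani.one_mem_spectrum_A t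
    rw [Complex.coe_smul, mul_one, Complex.ofReal_re] at h
    rwa [one_mul]
  · rw [Kakutani.A_add_B]
    exact (Kakutani.isNilpotent_weightedShift_sub_weightsOnMultiples m)
      |>.exists_norm_exp_smul_sub_one_le
end
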